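/- arXiv:2402.15086 — 7 statements merged into one kernel-verified Lean document; each statement's English description precedes it below -/
import Mathlib

section
/- The covariance of the numerator and denominator of the debiased IVW estimator equals v₁₂: Cov(θ̂₁, θ̂₂) = 2β₀ Σ_{j=1}^p σ_{Γ,j}^{-4} σ_{γ,j}² γ_j². -/
open MeasureTheory ProbabilityTheory

namespace DIVW4
open Real
open scoped NNReal ENNReal



lemma integrable_pow_mul_exp {b : ℝ} (hb : 0 < b) (n : ℕ) :
    Integrable (fun x : ℝ => x ^ n * Real.exp (-b * x ^ 2)) := by
  have h := integrable_rpow_mul_exp_neg_mul_sq hb (s := (n : ℝ))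
    (lt_of_lt_of_le (by norm_num) (Nat.cast_nonneg n))
  simpa [Real.rpow_natCast] using h

lemma integral_odd_eq_zero {f : ℝ → ℝ} (hf : ∀ x, f (-x) = - f x) :
    ∫ x, f x = 0 := by
  have h := integral_neg_eq_self f (volume : Measure ℝ)
  simp_rw [hf, integral_neg] at h
  linarith

lemma integral_sq_mul_exp {b : ℝ} (hb : 0 < b) :
    ∫ x : ℝ, x ^ 2 * Real.exp (-b * x ^ 2) = √(π / b) / (2 * b) := by
  have h1 : ∫ x : ℝ, x ^ 2 * Real.exp (-b * x ^ 2)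
      = 2 * ∫ x in Set.Ioi (0:ℝ), x ^ 2 * Real.exp (-b * x ^ 2) := by
    rw [← integral_comp_abs (f := fun x => x ^ 2 * Real.exp (-b * x ^ 2))]
    congr 1 with x
    rw [sq_abs]
  have h2 : ∫ x in Set.Ioi (0:ℝ), x ^ 2 * Real.exp (-b * x ^ 2)
      = b ^ (-(2 + 1) / 2 : ℝ) * (1 / 2) * Real.Gamma ((2 + 1) / 2) := by
    rw [← integral_rpow_mul_exp_neg_mul_rpow two_pos (by norm_num : (-1:ℝ) < 2) hb]
    refine setIntegral_congr_fun measurableSet_Ioi (fun x hx => ?_)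
    rw [← Real.rpow_natCast x 2]
    norm_num
  have hG : Real.Gamma ((2 + 1) / 2) = √π / 2 := by
    rw [show ((2:ℝ) + 1) / 2 = 1 / 2 + 1 by norm_num, Real.Gamma_add_one (by norm_num),
      Real.Gamma_one_half_eq]
    ring
  have hs : (0:ℝ) < √b := Real.sqrt_pos.mpr hb
  have hb' : b = √b ^ 2 := (Real.sq_sqrt hb.le).symm
  have h3 : b ^ (-(2 + 1) / 2 : ℝ) = (√b ^ 3)⁻¹ := by
    rw [show (-(2 + 1) / 2 : ℝ) = ((1:ℝ)/2) * (-(3:ℝ)) by norm_num,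
      Real.rpow_mul hb.le, ← Real.sqrt_eq_rpow, Real.rpow_neg hs.le,
      ← Real.rpow_natCast (√b) 3]
    norm_num
  have h4 : √(π / b) = √π / √b := Real.sqrt_div pi_pos.le b
  rw [h1, h2, hG, h3, h4]
  field_simp
  linear_combination hb'




variable {mm : ℝ} {v : ℝ≥0}

lemma integral_gaussianReal_eq (hv : v ≠ 0) (g : ℝ → ℝ) :
    ∫ x, g x ∂(gaussianReal mm v) = ∫ x, gaussianPDFReal mm v x * g x := by
  rw [gaussianReal_of_var_ne_zero mm hv,
    show gaussianPDF mm v = (fun x => ((gaussianPDFReal mm v x).toNNReal : ℝ≥0∞)) from rfl,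
    integral_withDensity_eq_integral_smul ((measurable_gaussianPDFReal mm v).real_toNNReal) g]
  congr 1 with x
  simp [NNReal.smul_def, Real.coe_toNNReal _ (gaussianPDFReal_nonneg mm v x)]

lemma integrable_gaussianReal_iff (hv : v ≠ 0) (g : ℝ → ℝ) :
    Integrable g (gaussianReal mm v) ↔ Integrable (fun x => gaussianPDFReal mm v x * g x) := by
  rw [gaussianReal_of_var_ne_zero mm hv,
    show gaussianPDF mm v = (fun x => ((gaussianPDFReal mm v x).toNNReal : ℝ≥0∞)) from rfl,
    integrable_withDensity_iff_integrable_smul ((measurable_gaussianPDFReal mm v).real_toNNReal)]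
  constructor <;> intro h <;> refine h.congr (Filter.Eventually.of_forall fun x => ?_) <;>
    simp [NNReal.smul_def, Real.coe_toNNReal _ (gaussianPDFReal_nonneg mm v x)]

lemma gaussianPDFReal_eq (hv : v ≠ 0) (x : ℝ) :
    gaussianPDFReal mm v x
      = (√(2 * π * (v:ℝ)))⁻¹ * Real.exp (-((2 * (v:ℝ))⁻¹) * (x - mm) ^ 2) := by
  rw [gaussianPDFReal,
    show -(x - mm) ^ 2 / (2 * (v:ℝ)) = -((2 * (v:ℝ))⁻¹ * (x - mm) ^ 2) by ring, neg_mul]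

lemma integrable_shift_pow {b c : ℝ} (hb : 0 < b) (n : ℕ) :
    Integrable (fun y : ℝ => (y + c) ^ n * Real.exp (-b * y ^ 2)) := by
  have heq : (fun y : ℝ => (y + c) ^ n * Real.exp (-b * y ^ 2))
      = fun y => ∑ k ∈ Finset.range (n + 1),
          (y ^ k * Real.exp (-b * y ^ 2)) * (c ^ (n - k) * (n.choose k : ℝ)) := by
    funext y
    rw [add_pow, Finset.sum_mul]
    exact Finset.sum_congr rfl fun k _ => by ring
  rw [heq]
  exact integrable_finset_sum _ fun k _ => (integrable_pow_mul_exp hb k).mul_const _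

lemma integrable_pow_gaussianReal (hv : v ≠ 0) (n : ℕ) :
    Integrable (fun x : ℝ => x ^ n) (gaussianReal mm v) := by
  have hv' : (0:ℝ) < (v:ℝ) := by
    have : 0 < v := lt_of_le_of_ne zero_le (Ne.symm hv)
    exact_mod_cast this
  have hb : (0:ℝ) < (2 * (v:ℝ))⁻¹ := by positivity
  rw [integrable_gaussianReal_iff hv]
  have heq : (fun x : ℝ => gaussianPDFReal mm v x * x ^ n)
      = fun x => ((fun y => (√(2 * π * (v:ℝ)))⁻¹ * ((y + mm) ^ n
          * Real.exp (-((2 * (v:ℝ))⁻¹) * y ^ 2))) (x - mm)) := by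
    funext x
    rw [gaussianPDFReal_eq hv]
    simp only [sub_add_cancel]
    ring
  rw [heq]
  exact ((integrable_shift_pow hb n).const_mul _).comp_sub_right mm

lemma integral_pow_gaussianReal_core (hv : v ≠ 0) (n : ℕ) :
    ∫ x, x ^ n ∂(gaussianReal mm v)
      = (√(2 * π * (v:ℝ)))⁻¹
          * ∫ y, (y + mm) ^ n * Real.exp (-((2 * (v:ℝ))⁻¹) * y ^ 2) := by
  rw [integral_gaussianReal_eq hv, ← integral_const_mul,
    ← integral_add_right_eq_self (fun x => gaussianPDFReal mm v x * x ^ n) mm]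
  congr 1 with y
  rw [gaussianPDFReal_eq hv]
  simp only [add_sub_cancel_right]
  ring

lemma integral_shift_pow {b c : ℝ} (hb : 0 < b) (n : ℕ) :
    ∫ y : ℝ, (y + c) ^ n * Real.exp (-b * y ^ 2)
      = ∑ k ∈ Finset.range (n + 1),
          (c ^ (n - k) * (n.choose k : ℝ)) * ∫ y : ℝ, y ^ k * Real.exp (-b * y ^ 2) := by
  have heq : (fun y : ℝ => (y + c) ^ n * Real.exp (-b * y ^ 2))
      = fun y => ∑ k ∈ Finset.range (n + 1),
          (c ^ (n - k) * (n.choose k : ℝ)) * (y ^ k * Real.exp (-b * y ^ 2)) := by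
    funext y
    rw [add_pow, Finset.sum_mul]
    exact Finset.sum_congr rfl fun k _ => by ring
  rw [heq, integral_finset_sum _ fun k _ => (integrable_pow_mul_exp hb k).const_mul _]
  exact Finset.sum_congr rfl fun k _ => integral_const_mul _ _

lemma integral_pow_one_mul_exp {b : ℝ} (hb : 0 < b) :
    ∫ y : ℝ, y ^ 1 * Real.exp (-b * y ^ 2) = 0 :=
  integral_odd_eq_zero fun x => by simp [neg_sq]

lemma integral_pow_three_mul_exp {b : ℝ} (hb : 0 < b) :
    ∫ y : ℝ, y ^ 3 * Real.exp (-b * y ^ 2) = 0 :=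
  integral_odd_eq_zero fun x => by
    rw [show ((-x) ^ 3 : ℝ) = -(x ^ 3) by ring, show ((-x) ^ 2 : ℝ) = x ^ 2 by ring]
    ring

lemma integral_pow_zero_mul_exp {b : ℝ} (hb : 0 < b) :
    ∫ y : ℝ, y ^ 0 * Real.exp (-b * y ^ 2) = √(π / b) := by
  simpa using integral_gaussian b



variable {mm : ℝ} {v : ℝ≥0}

lemma aux_consts (hv : v ≠ 0) :
    (√(2 * π * (v:ℝ)))⁻¹ * √(π / (2 * (v:ℝ))⁻¹) = 1 := by
  have hv' : (0:ℝ) < (v:ℝ) := by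
    have : 0 < v := lt_of_le_of_ne zero_le (Ne.symm hv)
    exact_mod_cast this
  rw [show π / (2 * (v:ℝ))⁻¹ = 2 * π * (v:ℝ) by field_simp]
  rw [inv_mul_cancel₀ (by positivity)]

lemma integral_id_gaussianReal' (hv : v ≠ 0) :
    ∫ x, x ∂(gaussianReal mm v) = mm := by
  have hv' : (0:ℝ) < (v:ℝ) := by
    have : 0 < v := lt_of_le_of_ne zero_le (Ne.symm hv)
    exact_mod_cast this
  have hb : (0:ℝ) < (2 * (v:ℝ))⁻¹ := by positivity
  have h0 : ∫ x, x ∂(gaussianReal mm v) = ∫ x, x ^ 1 ∂(gaussianReal mm v) := by norm_num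
  rw [h0, integral_pow_gaussianReal_core hv 1, integral_shift_pow hb 1,
    Finset.sum_range_succ, Finset.sum_range_one,
    integral_pow_zero_mul_exp hb, integral_pow_one_mul_exp hb]
  have h1 := aux_consts (v := v) hv
  simp only [Nat.choose_self, Nat.choose_zero_right, Nat.choose_one_right,
    show Nat.choose 3 2 = 3 from rfl, Nat.cast_one, Nat.cast_ofNat, pow_zero, pow_one,
    Nat.reduceSub, mul_zero, zero_mul, add_zero, zero_add, mul_one, one_mul]
  linear_combination mm * h1

lemma integral_sq_gaussianReal' (hv : v ≠ 0) :
    ∫ x, x ^ 2 ∂(gaussianReal mm v) = mm ^ 2 + (v:ℝ) := by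
  have hv' : (0:ℝ) < (v:ℝ) := by
    have : 0 < v := lt_of_le_of_ne zero_le (Ne.symm hv)
    exact_mod_cast this
  have hb : (0:ℝ) < (2 * (v:ℝ))⁻¹ := by positivity
  rw [integral_pow_gaussianReal_core hv 2, integral_shift_pow hb 2,
    Finset.sum_range_succ, Finset.sum_range_succ, Finset.sum_range_one,
    integral_pow_zero_mul_exp hb, integral_pow_one_mul_exp hb, integral_sq_mul_exp hb]
  have h1 := aux_consts (v := v) hv
  have h2 : √(π / (2 * (v:ℝ))⁻¹) / (2 * (2 * (v:ℝ))⁻¹) = √(π / (2 * (v:ℝ))⁻¹) * (v:ℝ) := by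
    rw [show (2 * (2 * (v:ℝ))⁻¹) = ((v:ℝ))⁻¹ by field_simp]
    field_simp
  rw [h2]
  simp only [Nat.choose_self, Nat.choose_zero_right, Nat.choose_one_right,
    show Nat.choose 3 2 = 3 from rfl, Nat.cast_one, Nat.cast_ofNat, pow_zero, pow_one,
    Nat.reduceSub, mul_zero, zero_mul, add_zero, zero_add, mul_one, one_mul]
  linear_combination (mm ^ 2 + (v:ℝ)) * h1

lemma integral_cube_gaussianReal' (hv : v ≠ 0) :
    ∫ x, x ^ 3 ∂(gaussianReal mm v) = mm ^ 3 + 3 * mm * (v:ℝ) := by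
  have hv' : (0:ℝ) < (v:ℝ) := by
    have : 0 < v := lt_of_le_of_ne zero_le (Ne.symm hv)
    exact_mod_cast this
  have hb : (0:ℝ) < (2 * (v:ℝ))⁻¹ := by positivity
  rw [integral_pow_gaussianReal_core hv 3, integral_shift_pow hb 3,
    Finset.sum_range_succ, Finset.sum_range_succ, Finset.sum_range_succ, Finset.sum_range_one,
    integral_pow_zero_mul_exp hb, integral_pow_one_mul_exp hb, integral_sq_mul_exp hb,
    integral_pow_three_mul_exp hb]
  have h1 := aux_consts (v := v) hv
  have h2 : √(π / (2 * (v:ℝ))⁻¹) / (2 * (2 * (v:ℝ))⁻¹) = √(π / (2 * (v:ℝ))⁻¹) * (v:ℝ) := by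
    rw [show (2 * (2 * (v:ℝ))⁻¹) = ((v:ℝ))⁻¹ by field_simp]
    field_simp
  rw [h2]
  simp only [Nat.choose_self, Nat.choose_zero_right, Nat.choose_one_right,
    show Nat.choose 3 2 = 3 from rfl, Nat.cast_one, Nat.cast_ofNat, pow_zero, pow_one,
    Nat.reduceSub, mul_zero, zero_mul, add_zero, zero_add, mul_one, one_mul]
  linear_combination (mm ^ 3 + 3 * mm * (v:ℝ)) * h1



lemma aemeasurable_of_map_gaussianReal {Ω : Type*} [MeasurableSpace Ω] {μ : Measure Ω}
    {Z : Ω → ℝ} {m : ℝ} {v : ℝ≥0} (h : Measure.map Z μ = gaussianReal m v) :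
    AEMeasurable Z μ := by
  by_contra hc
  rw [Measure.map_of_not_aemeasurable hc] at h
  have h1 : (gaussianReal m v) Set.univ = 1 := measure_univ
  rw [← h] at h1
  simp at h1

lemma biInter_ae_eq {ι Ω : Type*} [MeasurableSpace Ω] {μ : Measure Ω} (S : Finset ι)
    {A B : ι → Set Ω} (h : ∀ i, A i =ᵐ[μ] B i) :
    ((⋂ i ∈ S, A i : Set Ω)) =ᵐ[μ] (⋂ i ∈ S, B i) := by
  classical
  induction S using Finset.induction_on with
  | empty => simp
  | insert _ _ hj ih =>
    simp only [Finset.set_biInter_insert]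
    exact (h _).inter ih

lemma iIndepFun_congr_ae {ι Ω : Type*} [MeasurableSpace Ω] {μ : Measure Ω} {f g : ι → Ω → ℝ}
    (h : iIndepFun f μ) (hfg : ∀ i, f i =ᵐ[μ] g i) :
    iIndepFun g μ := by
  classical
  rw [iIndepFun_iff_measure_inter_preimage_eq_mul] at h ⊢
  intro S sets hsets
  have hpre : ∀ i : ι, (f i ⁻¹' sets i : Set Ω) =ᵐ[μ] (g i ⁻¹' sets i) := by
    intro i
    rw [Filter.eventuallyEq_set]
    filter_upwards [hfg i] with ω hω
    rw [Set.mem_preimage, Set.mem_preimage, hω]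
  have hI := biInter_ae_eq S hpre
  rw [← measure_congr hI, h S hsets]
  exact Finset.prod_congr rfl fun i _ => (measure_congr (hpre i))

variable {Ω : Type*} [MeasurableSpace Ω] {μ : Measure Ω} {Z : Ω → ℝ} {m : ℝ} {v : ℝ≥0}

lemma integrable_pow_of_map (hZ : Measurable Z) (hv : v ≠ 0)
    (hmap : Measure.map Z μ = gaussianReal m v) (n : ℕ) :
    Integrable (fun ω => Z ω ^ n) μ := by
  have h : Integrable (fun x : ℝ => x ^ n) (Measure.map Z μ) := by
    rw [hmap]; exact integrable_pow_gaussianReal hv n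
  have := (integrable_map_measure (measurable_id.pow_const n).aestronglyMeasurable
    hZ.aemeasurable).mp h
  simpa [Function.comp_def] using this

lemma integral_id_of_map (hZ : Measurable Z) (hv : v ≠ 0)
    (hmap : Measure.map Z μ = gaussianReal m v) :
    ∫ ω, Z ω ∂μ = m :=
  calc ∫ ω, Z ω ∂μ = ∫ y, y ∂(Measure.map Z μ) :=
        (integral_map hZ.aemeasurable measurable_id.aestronglyMeasurable).symm
    _ = m := by rw [hmap]; exact integral_id_gaussianReal' hv

lemma integral_sq_of_map (hZ : Measurable Z) (hv : v ≠ 0)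
    (hmap : Measure.map Z μ = gaussianReal m v) :
    ∫ ω, Z ω ^ 2 ∂μ = m ^ 2 + (v : ℝ) :=
  calc ∫ ω, Z ω ^ 2 ∂μ = ∫ y, y ^ 2 ∂(Measure.map Z μ) :=
        (integral_map hZ.aemeasurable (measurable_id.pow_const 2).aestronglyMeasurable).symm
    _ = m ^ 2 + (v : ℝ) := by rw [hmap]; exact integral_sq_gaussianReal' hv

lemma integral_cube_of_map (hZ : Measurable Z) (hv : v ≠ 0)
    (hmap : Measure.map Z μ = gaussianReal m v) :
    ∫ ω, Z ω ^ 3 ∂μ = m ^ 3 + 3 * m * (v : ℝ) :=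
  calc ∫ ω, Z ω ^ 3 ∂μ = ∫ y, y ^ 3 ∂(Measure.map Z μ) :=
        (integral_map hZ.aemeasurable (measurable_id.pow_const 3).aestronglyMeasurable).symm
    _ = m ^ 3 + 3 * m * (v : ℝ) := by rw [hmap]; exact integral_cube_gaussianReal' hv


end DIVW4

/-- the covariance of the numerator and denominator of the dIVW
estimator equals `v₁₂ = 2 β₀ ∑ j, σΓ j ⁻⁴ σγ j ² γ j ²`. Covariance is expressed
as `E[θ̂₁ θ̂₂] - E[θ̂₁] E[θ̂₂]`. -/
theorem dIVW_num_denom_covariance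
{Ω : Type*} [MeasureSpace Ω] [IsProbabilityMeasure (ℙ : Measure Ω)]
    (p : ℕ) (hp : 1 ≤ p) (γ : Fin p → ℝ) (β₀ : ℝ)
    (σγ σΓ : Fin p → ℝ) (hσγ : ∀ j, 0 < σγ j) (hσΓ : ∀ j, 0 < σΓ j)
    (γhat Γhat : Fin p → Ω → ℝ)
    (hindep : iIndepFun
      (Sum.elim γhat Γhat : Fin p ⊕ Fin p → Ω → ℝ) ℙ)
    (hγ : ∀ j, Measure.map (γhat j) ℙ = gaussianReal (γ j) ⟨(σγ j) ^ 2, sq_nonneg _⟩)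
    (hΓ : ∀ j, Measure.map (Γhat j) ℙ = gaussianReal (β₀ * γ j) ⟨(σΓ j) ^ 2, sq_nonneg _⟩) :
    (∫ ω, (∑ j, ((σΓ j) ^ 2)⁻¹ * (γhat j ω * Γhat j ω))
        * (∑ j, ((σΓ j) ^ 2)⁻¹ * ((γhat j ω) ^ 2 - (σγ j) ^ 2)) ∂ℙ)
      - (∫ ω, ∑ j, ((σΓ j) ^ 2)⁻¹ * (γhat j ω * Γhat j ω) ∂ℙ)
        * (∫ ω, ∑ j, ((σΓ j) ^ 2)⁻¹ * ((γhat j ω) ^ 2 - (σγ j) ^ 2) ∂ℙ)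
      = 2 * β₀ * ∑ j, ((σΓ j) ^ 4)⁻¹ * ((σγ j) ^ 2 * (γ j) ^ 2) := by
  classical
  have haem : ∀ i : Fin p ⊕ Fin p, AEMeasurable (Sum.elim γhat Γhat i : Ω → ℝ) ℙ := by
    rintro (j | j)
    · exact DIVW4.aemeasurable_of_map_gaussianReal (hγ j)
    · exact DIVW4.aemeasurable_of_map_gaussianReal (hΓ j)
  set F : Fin p ⊕ Fin p → Ω → ℝ := fun i => (haem i).mk _ with hFdef
  have hFm : ∀ i, Measurable (F i) := fun i => (haem i).measurable_mk
  have hFeq : ∀ i, (Sum.elim γhat Γhat i : Ω → ℝ) =ᵐ[ℙ] F i := fun i => (haem i).ae_eq_mk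
  have hFindep : iIndepFun F ℙ := DIVW4.iIndepFun_congr_ae hindep hFeq
  set X : Fin p → Ω → ℝ := fun j => F (Sum.inl j) with hXdef
  set Y : Fin p → Ω → ℝ := fun j => F (Sum.inr j) with hYdef
  have hXm : ∀ j, Measurable (X j) := fun j => hFm _
  have hYm : ∀ j, Measurable (Y j) := fun j => hFm _
  have hXeq : ∀ j, γhat j =ᵐ[ℙ] X j := fun j => hFeq (Sum.inl j)
  have hYeq : ∀ j, Γhat j =ᵐ[ℙ] Y j := fun j => hFeq (Sum.inr j)
  have hXmap : ∀ j, Measure.map (X j) ℙ = gaussianReal (γ j) ⟨(σγ j) ^ 2, sq_nonneg _⟩ :=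
    fun j => (Measure.map_congr (hXeq j)).symm.trans (hγ j)
  have hYmap : ∀ j, Measure.map (Y j) ℙ = gaussianReal (β₀ * γ j) ⟨(σΓ j) ^ 2, sq_nonneg _⟩ :=
    fun j => (Measure.map_congr (hYeq j)).symm.trans (hΓ j)
  have hvγ : ∀ j, (⟨(σγ j) ^ 2, sq_nonneg _⟩ : NNReal) ≠ 0 := by
    intro j h
    have h2 : ((⟨(σγ j) ^ 2, sq_nonneg _⟩ : NNReal) : ℝ) = 0 := by rw [h]; simp
    exact pow_ne_zero 2 (hσγ j).ne' h2
  have hvΓ : ∀ j, (⟨(σΓ j) ^ 2, sq_nonneg _⟩ : NNReal) ≠ 0 := by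
    intro j h
    have h2 : ((⟨(σΓ j) ^ 2, sq_nonneg _⟩ : NNReal) : ℝ) = 0 := by rw [h]; simp
    exact pow_ne_zero 2 (hσΓ j).ne' h2
  -- moments
  have hX1 : ∀ j, ∫ ω, X j ω ∂ℙ = γ j :=
    fun j => DIVW4.integral_id_of_map (hXm j) (hvγ j) (hXmap j)
  have hX2 : ∀ j, ∫ ω, X j ω ^ 2 ∂ℙ = γ j ^ 2 + (σγ j) ^ 2 :=
    fun j => DIVW4.integral_sq_of_map (hXm j) (hvγ j) (hXmap j)
  have hX3 : ∀ j, ∫ ω, X j ω ^ 3 ∂ℙ = γ j ^ 3 + 3 * γ j * (σγ j) ^ 2 :=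
    fun j => DIVW4.integral_cube_of_map (hXm j) (hvγ j) (hXmap j)
  have hY1 : ∀ j, ∫ ω, Y j ω ∂ℙ = β₀ * γ j :=
    fun j => DIVW4.integral_id_of_map (hYm j) (hvΓ j) (hYmap j)
  have hiX : ∀ j (n : ℕ), Integrable (fun ω => X j ω ^ n) ℙ :=
    fun j n => DIVW4.integrable_pow_of_map (hXm j) (hvγ j) (hXmap j) n
  have hiX1 : ∀ j, Integrable (X j) ℙ := fun j => by simpa using hiX j 1
  have hiY1 : ∀ j, Integrable (Y j) ℙ := fun j => by
    simpa using DIVW4.integrable_pow_of_map (hYm j) (hvΓ j) (hYmap j) 1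
  -- independence
  have hXYind : ∀ j, IndepFun (X j) (Y j) ℙ := fun j => hFindep.indepFun (by simp)
  have hoff : ∀ j k, j ≠ k →
      IndepFun (fun ω => X j ω * Y j ω) (fun ω => X k ω ^ 2 - (σγ k) ^ 2) ℙ := by
    intro j k hjk
    have h := hFindep.indepFun_prodMk hFm (Sum.inl j) (Sum.inr j) (Sum.inl k)
      (by simp [hjk]) (by simp)
    exact h.comp (measurable_fst.mul measurable_snd) ((measurable_id.pow_const 2).sub_const _)
  have hdiag : ∀ j, IndepFun (Y j) (fun ω => X j ω ^ 3 - (σγ j) ^ 2 * X j ω) ℙ := fun j =>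
    (hFindep.indepFun (by simp)).comp measurable_id
      ((measurable_id.pow_const 3).sub (measurable_id.const_mul _))
  have hiXY : ∀ j, Integrable (fun ω => X j ω * Y j ω) ℙ :=
    fun j => (hXYind j).integrable_mul (hiX1 j) (hiY1 j)
  have hiB : ∀ k, Integrable (fun ω => X k ω ^ 2 - (σγ k) ^ 2) ℙ :=
    fun k => (hiX k 2).sub (integrable_const _)
  have hTint : ∀ j k, Integrable (fun ω => (X j ω * Y j ω) * (X k ω ^ 2 - (σγ k) ^ 2)) ℙ := by
    intro j k
    by_cases hjk : j = k
    · subst hjk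
      have h : Integrable (fun ω => Y j ω * (X j ω ^ 3 - (σγ j) ^ 2 * X j ω)) ℙ :=
        (hdiag j).integrable_mul (hiY1 j) ((hiX j 3).sub ((hiX1 j).const_mul ((σγ j) ^ 2)))
      exact h.congr (Filter.Eventually.of_forall fun ω => by ring)
    · exact (hoff j k hjk).integrable_mul (hiXY j) (hiB k)
  have hXYval : ∀ j, ∫ ω, X j ω * Y j ω ∂ℙ = γ j * (β₀ * γ j) := fun j =>
    ((hXYind j).integral_mul_eq_mul_integral (hXm j).aestronglyMeasurable (hYm j).aestronglyMeasurable).trans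
      (by rw [hX1 j, hY1 j])
  have hTval : ∀ j k, ∫ ω, (X j ω * Y j ω) * (X k ω ^ 2 - (σγ k) ^ 2) ∂ℙ
      = β₀ * γ j ^ 2 * γ k ^ 2
        + (if j = k then 2 * β₀ * ((σγ j) ^ 2 * γ j ^ 2) else 0) := by
    intro j k
    by_cases hjk : j = k
    · subst hjk
      rw [if_pos rfl]
      have e : ∫ ω, (X j ω * Y j ω) * (X j ω ^ 2 - (σγ j) ^ 2) ∂ℙ
          = ∫ ω, Y j ω * (X j ω ^ 3 - (σγ j) ^ 2 * X j ω) ∂ℙ :=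
        integral_congr_ae (Filter.Eventually.of_forall fun ω => by ring)
      rw [e]
      have hB : ∫ ω, (X j ω ^ 3 - (σγ j) ^ 2 * X j ω) ∂ℙ
          = (γ j ^ 3 + 3 * γ j * (σγ j) ^ 2) - (σγ j) ^ 2 * γ j := by
        rw [integral_sub (hiX j 3) ((hiX1 j).const_mul _), hX3 j, integral_const_mul, hX1 j]
      have h := (hdiag j).integral_mul_eq_mul_integral (hYm j).aestronglyMeasurable
        (((hXm j).pow_const 3).sub ((hXm j).const_mul _)).aestronglyMeasurable
      refine h.trans ?_
      rw [hY1 j, hB]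
      ring
    · rw [if_neg hjk, add_zero]
      have h := (hoff j k hjk).integral_mul_eq_mul_integral
        ((hXm j).mul (hYm j)).aestronglyMeasurable
        (((hXm k).pow_const 2).sub_const _).aestronglyMeasurable
      refine h.trans ?_
      rw [hXYval j, integral_sub (hiX k 2) (integrable_const _), hX2 k, integral_const]
      simp only [probReal_univ, smul_eq_mul, one_mul]
      ring
  -- rewrite the statement integrals with X, Y
  have hae : ∀ᵐ ω ∂(ℙ : Measure Ω), (∀ j, γhat j ω = X j ω) ∧ (∀ j, Γhat j ω = Y j ω) := by
    rw [Filter.eventually_and]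
    constructor <;> rw [MeasureTheory.ae_all_iff]
    · exact fun j => hXeq j
    · exact fun j => hYeq j
  have e1 : ∫ ω, (∑ j, ((σΓ j) ^ 2)⁻¹ * (γhat j ω * Γhat j ω))
        * (∑ j, ((σΓ j) ^ 2)⁻¹ * ((γhat j ω) ^ 2 - (σγ j) ^ 2)) ∂ℙ
      = ∫ ω, (∑ j, ((σΓ j) ^ 2)⁻¹ * (X j ω * Y j ω))
        * (∑ j, ((σΓ j) ^ 2)⁻¹ * ((X j ω) ^ 2 - (σγ j) ^ 2)) ∂ℙ := by
    refine integral_congr_ae ?_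
    filter_upwards [hae] with ω hω
    simp only [hω.1, hω.2]
  have e2 : ∫ ω, ∑ j, ((σΓ j) ^ 2)⁻¹ * (γhat j ω * Γhat j ω) ∂ℙ
      = ∫ ω, ∑ j, ((σΓ j) ^ 2)⁻¹ * (X j ω * Y j ω) ∂ℙ := by
    refine integral_congr_ae ?_
    filter_upwards [hae] with ω hω
    simp only [hω.1, hω.2]
  have e3 : ∫ ω, ∑ j, ((σΓ j) ^ 2)⁻¹ * ((γhat j ω) ^ 2 - (σγ j) ^ 2) ∂ℙ
      = ∫ ω, ∑ j, ((σΓ j) ^ 2)⁻¹ * ((X j ω) ^ 2 - (σγ j) ^ 2) ∂ℙ := by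
    refine integral_congr_ae ?_
    filter_upwards [hae] with ω hω
    simp only [hω.1]
  rw [e1, e2, e3]
  -- compute the three integrals
  have hsum1 : ∫ ω, ∑ j, ((σΓ j) ^ 2)⁻¹ * (X j ω * Y j ω) ∂ℙ
      = ∑ j, ((σΓ j) ^ 2)⁻¹ * (γ j * (β₀ * γ j)) := by
    rw [integral_finset_sum _ (fun j _ => (hiXY j).const_mul _)]
    exact Finset.sum_congr rfl fun j _ => by rw [integral_const_mul, hXYval j]
  have hsum2 : ∫ ω, ∑ j, ((σΓ j) ^ 2)⁻¹ * ((X j ω) ^ 2 - (σγ j) ^ 2) ∂ℙ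
      = ∑ j, ((σΓ j) ^ 2)⁻¹ * (γ j ^ 2) := by
    rw [integral_finset_sum _ (fun j _ => (hiB j).const_mul _)]
    refine Finset.sum_congr rfl fun j _ => ?_
    rw [integral_const_mul, integral_sub (hiX j 2) (integrable_const _), hX2 j, integral_const]
    simp only [probReal_univ, smul_eq_mul, one_mul]
    ring
  have hbig : ∫ ω, (∑ j, ((σΓ j) ^ 2)⁻¹ * (X j ω * Y j ω))
        * (∑ j, ((σΓ j) ^ 2)⁻¹ * ((X j ω) ^ 2 - (σγ j) ^ 2)) ∂ℙ
      = ∑ j, ∑ k, (((σΓ j) ^ 2)⁻¹ * ((σΓ k) ^ 2)⁻¹)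
          * ∫ ω, (X j ω * Y j ω) * (X k ω ^ 2 - (σγ k) ^ 2) ∂ℙ := by
    have e : ∀ ω, (∑ j, ((σΓ j) ^ 2)⁻¹ * (X j ω * Y j ω))
        * (∑ k, ((σΓ k) ^ 2)⁻¹ * ((X k ω) ^ 2 - (σγ k) ^ 2))
        = ∑ j, ∑ k, (((σΓ j) ^ 2)⁻¹ * ((σΓ k) ^ 2)⁻¹)
            * ((X j ω * Y j ω) * (X k ω ^ 2 - (σγ k) ^ 2)) := by
      intro ω
      rw [Finset.sum_mul_sum]
      exact Finset.sum_congr rfl fun j _ => Finset.sum_congr rfl fun k _ => by ring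
    simp_rw [e]
    rw [integral_finset_sum _ (fun j _ => integrable_finset_sum _
      (fun k _ => (hTint j k).const_mul _))]
    refine Finset.sum_congr rfl fun j _ => ?_
    rw [integral_finset_sum _ (fun k _ => (hTint j k).const_mul _)]
    exact Finset.sum_congr rfl fun k _ => integral_const_mul _ _
  rw [hbig, hsum1, hsum2]
  simp_rw [hTval]
  -- final algebra
  have hfactor : ∑ j, ∑ k, (((σΓ j) ^ 2)⁻¹ * ((σΓ k) ^ 2)⁻¹) * (β₀ * γ j ^ 2 * γ k ^ 2)
      = (∑ j, ((σΓ j) ^ 2)⁻¹ * (γ j * (β₀ * γ j))) * (∑ k, ((σΓ k) ^ 2)⁻¹ * (γ k ^ 2)) := by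
    rw [Finset.sum_mul_sum]
    exact Finset.sum_congr rfl fun j _ => Finset.sum_congr rfl fun k _ => by ring
  simp only [mul_add, mul_ite, mul_zero, Finset.sum_add_distrib, Finset.sum_ite_eq,
    Finset.mem_univ, if_true]
  rw [hfactor, add_sub_cancel_left, Finset.mul_sum]
  refine Finset.sum_congr rfl fun j _ => ?_
  have hc : ((σΓ j) ^ 2)⁻¹ * ((σΓ j) ^ 2)⁻¹ = ((σΓ j) ^ 4)⁻¹ := by
    rw [← mul_inv]
    ring_nf
  rw [hc]
  ring
end

section
/- The statistic v̂₂ = Σ_{j=1}^p σ_{Γ,j}^{-4}(4 σ_{γ,j}² γ̂_j² − 2 σ_{γ,j}⁴) is an unbiased estimator of v₂ = Var(θ̂₂): E[v̂₂] = Σ_{j=1}^p σ_{Γ,j}^{-4}(4 σ_{γ,j}² γ_j² + 2 σ_{γ,j}⁴). -/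
open MeasureTheory ProbabilityTheory
open Real
open scoped ENNReal NNReal

lemma integrable_sq_mul_exp {b : ℝ} (hb : 0 < b) :
    Integrable (fun x : ℝ => x ^ 2 * rexp (-b * x ^ 2)) := by
  have h := integrable_rpow_mul_exp_neg_mul_sq hb (s := 2) (by norm_num)
  simpa [Real.rpow_two] using h

lemma integral_sq_mul_exp {b : ℝ} (hb : 0 < b) :
    ∫ x : ℝ, x ^ 2 * rexp (-b * x ^ 2) = b ^ (-(3:ℝ)/2) * √π / 2 := by
  have hint := integrable_sq_mul_exp hb
  have hIoi : ∫ x in Set.Ioi (0:ℝ), x ^ 2 * rexp (-b * x ^ 2)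
      = b ^ (-(3:ℝ)/2) * √π / 4 := by
    have h := integral_rpow_mul_exp_neg_mul_rpow (p := 2) (q := 2)
      (by norm_num) (by norm_num) hb
    simp_rw [Real.rpow_two] at h
    rw [h, show ((2:ℝ) + 1) / 2 = 1/2 + 1 by norm_num,
      Real.Gamma_add_one (by norm_num), Real.Gamma_one_half_eq,
      show -((2:ℝ) + 1) / 2 = -(3:ℝ)/2 by norm_num]
    ring
  have hIic : ∫ x in Set.Iic (0:ℝ), x ^ 2 * rexp (-b * x ^ 2)
      = ∫ x in Set.Ioi (0:ℝ), x ^ 2 * rexp (-b * x ^ 2) := by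
    have h := integral_comp_neg_Ioi (f := fun x : ℝ => x ^ 2 * rexp (-b * x ^ 2)) (c := 0)
    simp only [neg_sq, neg_zero] at h
    exact h.symm
  rw [← intervalIntegral.integral_Iic_add_Ioi (hint.integrableOn) (hint.integrableOn), hIic, hIoi]
  ring

lemma integral_id_mul_exp {b : ℝ} (hb : 0 < b) :
    ∫ x : ℝ, x * rexp (-b * x ^ 2) = 0 := by
  have h := MeasureTheory.integral_neg_eq_self (fun x : ℝ => x * rexp (-b * x ^ 2))
    (volume : Measure ℝ)
  simp only [neg_sq, neg_mul] at h ⊢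
  rw [MeasureTheory.integral_neg] at h
  linarith


lemma gaussianPDF_eq_coe (m : ℝ) (v : ℝ≥0) :
    gaussianPDF m v = fun x => ((Real.toNNReal (gaussianPDFReal m v x) : ℝ≥0) : ℝ≥0∞) := rfl

lemma sq_gaussianReal (m : ℝ) (v : ℝ≥0) (hv : v ≠ 0) :
    Integrable (fun x : ℝ => x ^ 2) (gaussianReal m v) ∧
    ∫ x, x ^ 2 ∂(gaussianReal m v) = m ^ 2 + v := by
  have hvpos : (0:ℝ) < v := NNReal.coe_pos.mpr (pos_iff_ne_zero.mpr hv)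
  set b : ℝ := (2 * (v:ℝ))⁻¹ with hbdef
  have hb : 0 < b := by positivity
  set c : ℝ := (√(2 * π * (v:ℝ)))⁻¹ with hcdef
  have hmeas : Measurable fun x : ℝ => Real.toNNReal (gaussianPDFReal m v x) :=
    (measurable_gaussianPDFReal m v).real_toNNReal
  have h1 : (fun x : ℝ => Real.toNNReal (gaussianPDFReal m v x) • x ^ 2)
      = fun x => (fun y => c * ((y + m) ^ 2 * rexp (-b * y ^ 2))) (x - m) := by
    funext x
    simp only [NNReal.smul_def, Real.coe_toNNReal _ (gaussianPDFReal_nonneg m v x), smul_eq_mul]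
    rw [gaussianPDFReal]
    rw [show -(x - m) ^ 2 / (2 * (v:ℝ)) = -b * (x - m) ^ 2 by
      rw [hbdef, div_eq_mul_inv]; ring]
    simp only [sub_add_cancel]
    ring
  have h2 : (fun y : ℝ => c * ((y + m) ^ 2 * rexp (-b * y ^ 2)))
      = fun y => c * (y ^ 2 * rexp (-b * y ^ 2) +
          ((2 * m) * (y * rexp (-b * y ^ 2)) + m ^ 2 * rexp (-b * y ^ 2))) := by
    funext y; ring
  have hGint : Integrable (fun y : ℝ => c * ((y + m) ^ 2 * rexp (-b * y ^ 2))) := by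
    rw [h2]
    exact ((integrable_sq_mul_exp hb).add
      (((integrable_mul_exp_neg_mul_sq hb).const_mul _).add
        ((integrable_exp_neg_mul_sq hb).const_mul _))).const_mul c
  constructor
  · rw [gaussianReal_of_var_ne_zero _ hv, gaussianPDF_eq_coe,
      integrable_withDensity_iff_integrable_smul hmeas, h1]
    exact hGint.comp_sub_right m
  · rw [gaussianReal_of_var_ne_zero _ hv, gaussianPDF_eq_coe,
      integral_withDensity_eq_integral_smul hmeas, h1,
      integral_sub_right_eq_self (fun y => c * ((y + m) ^ 2 * rexp (-b * y ^ 2))) m,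
      h2, integral_const_mul]
    have i1 := integrable_sq_mul_exp hb
    have i2 : Integrable (fun a : ℝ => 2 * m * (a * rexp (-b * a ^ 2))) :=
      (integrable_mul_exp_neg_mul_sq hb).const_mul _
    have i3 : Integrable (fun a : ℝ => m ^ 2 * rexp (-b * a ^ 2)) :=
      (integrable_exp_neg_mul_sq hb).const_mul _
    have i23 : Integrable (fun a : ℝ => 2 * m * (a * rexp (-b * a ^ 2))
        + m ^ 2 * rexp (-b * a ^ 2)) := i2.add i3
    rw [integral_add i1 i23, integral_add i2 i3,
      integral_const_mul, integral_const_mul,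
      integral_sq_mul_exp hb, integral_id_mul_exp hb, integral_gaussian]
    have h2v : (0:ℝ) < 2 * (v:ℝ) := by positivity
    have e1 : b ^ (-(3:ℝ)/2) = (2*(v:ℝ)) ^ ((3:ℝ)/2) := by
      rw [hbdef, show (-(3:ℝ)/2) = -((3:ℝ)/2) by ring,
        Real.rpow_neg (by positivity), Real.inv_rpow h2v.le, inv_inv]
    have e1' : (2*(v:ℝ)) ^ ((3:ℝ)/2) = 2*(v:ℝ) * √(2*(v:ℝ)) := by
      rw [show (3:ℝ)/2 = 1 + 1/2 by norm_num, Real.rpow_add h2v, Real.rpow_one,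
        ← Real.sqrt_eq_rpow]
    have e2 : √(π/b) = √(2*π*(v:ℝ)) := by
      rw [hbdef]
      congr 1
      field_simp
    have e3 : √(2*π*(v:ℝ)) = √(2*(v:ℝ)) * √π := by
      rw [show 2*π*(v:ℝ) = (2*(v:ℝ))*π by ring, Real.sqrt_mul h2v.le]
    have hs2v : √(2*(v:ℝ)) ≠ 0 := by positivity
    have hsπ : √π ≠ 0 := by
      have := Real.pi_pos
      positivity
    rw [e1, e1', e2, e3, hcdef, e3]
    field_simp
    ring

/-- `v̂₂ = ∑ j, σΓ j ⁻⁴ (4 σγ j ² γ̂ j ² - 2 σγ j ⁴)` is an unbiased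
estimator of `v₂ = Var(θ̂₂) = ∑ j, σΓ j ⁻⁴ (4 σγ j ² γ j ² + 2 σγ j ⁴)`. -/
theorem v2hat_unbiased
{Ω : Type*} [MeasureSpace Ω] [IsProbabilityMeasure (ℙ : Measure Ω)]
    (p : ℕ) (hp : 1 ≤ p) (γ : Fin p → ℝ) (β₀ : ℝ)
    (σγ σΓ : Fin p → ℝ) (hσγ : ∀ j, 0 < σγ j) (hσΓ : ∀ j, 0 < σΓ j)
    (γhat Γhat : Fin p → Ω → ℝ)
    (hindep : iIndepFun
      (Sum.elim γhat Γhat : Fin p ⊕ Fin p → Ω → ℝ) ℙ)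
    (hγ : ∀ j, Measure.map (γhat j) ℙ = gaussianReal (γ j) ⟨(σγ j) ^ 2, sq_nonneg _⟩)
    (hΓ : ∀ j, Measure.map (Γhat j) ℙ = gaussianReal (β₀ * γ j) ⟨(σΓ j) ^ 2, sq_nonneg _⟩) :
    (∫ ω, ∑ j, ((σΓ j) ^ 4)⁻¹ *
        (4 * (σγ j) ^ 2 * (γhat j ω) ^ 2 - 2 * (σγ j) ^ 4) ∂ℙ)
      = ∑ j, ((σΓ j) ^ 4)⁻¹ * (4 * (σγ j) ^ 2 * (γ j) ^ 2 + 2 * (σγ j) ^ 4) := by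
  have key : ∀ j, Integrable (fun ω => (γhat j ω) ^ 2) ℙ ∧
      ∫ ω, (γhat j ω) ^ 2 ∂ℙ = (γ j) ^ 2 + (σγ j) ^ 2 := by
    intro j
    have hv : ((⟨(σγ j) ^ 2, sq_nonneg _⟩ : ℝ≥0)) ≠ 0 :=
      fun h => (pow_pos (hσγ j) 2).ne' (Subtype.ext_iff.mp h)
    have haem : AEMeasurable (γhat j) ℙ :=
      by refine aemeasurable_of_map_neZero ?_; rw [hγ j]; exact ⟨@IsProbabilityMeasure.ne_zero _ _ _ (instIsProbabilityMeasureGaussianReal _ _)⟩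
    have hg : AEStronglyMeasurable (fun x : ℝ => x ^ 2) (Measure.map (γhat j) ℙ) :=
      (measurable_id.pow_const 2).aestronglyMeasurable
    have h := sq_gaussianReal (γ j) ⟨(σγ j) ^ 2, sq_nonneg _⟩ hv
    constructor
    · have := (integrable_map_measure hg haem).mp (by rw [hγ j]; exact h.1)
      exact this
    · calc ∫ ω, (γhat j ω) ^ 2 ∂ℙ = ∫ x, x ^ 2 ∂(Measure.map (γhat j) ℙ) :=
            (integral_map haem hg).symm
        _ = (γ j) ^ 2 + (σγ j) ^ 2 := by rw [hγ j, h.2]; rfl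
  have hfun : ∀ j : Fin p, (fun ω => ((σΓ j) ^ 4)⁻¹ *
        (4 * (σγ j) ^ 2 * (γhat j ω) ^ 2 - 2 * (σγ j) ^ 4))
      = fun ω => (((σΓ j) ^ 4)⁻¹ * (4 * (σγ j) ^ 2)) * (γhat j ω) ^ 2
          - ((σΓ j) ^ 4)⁻¹ * (2 * (σγ j) ^ 4) := by
    intro j; funext ω; ring
  have hterm : ∀ j : Fin p, Integrable (fun ω => ((σΓ j) ^ 4)⁻¹ *
      (4 * (σγ j) ^ 2 * (γhat j ω) ^ 2 - 2 * (σγ j) ^ 4)) ℙ := by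
    intro j
    rw [hfun j]
    exact ((key j).1.const_mul _).sub (integrable_const _)
  rw [integral_finset_sum _ (fun j _ => hterm j)]
  refine Finset.sum_congr rfl fun j _ => ?_
  rw [hfun j, integral_sub ((key j).1.const_mul _) (integrable_const _),
    integral_const_mul, (key j).2, integral_const, probReal_univ, one_smul]
  ring
end

section
/- The statistic v̂₁₂ = 2 Σ_{j=1}^p σ_{Γ,j}^{-4} σ_{γ,j}² γ̂_j Γ̂_j is an unbiased estimator of v₁₂ = Cov(θ̂₁, θ̂₂): E[v̂₁₂] = 2β₀ Σ_{j=1}^p σ_{Γ,j}^{-4} σ_{γ,j}² γ_j². -/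
open MeasureTheory ProbabilityTheory Real
open scoped NNReal ENNReal

lemma aux_integrable_id_mul_gaussianPDFReal (μ : ℝ) (v : ℝ≥0) (hv : v ≠ 0) :
    Integrable (fun x => gaussianPDFReal μ v x * x) := by
  have hvpos : (0:ℝ) < v := lt_of_le_of_ne v.coe_nonneg (by exact_mod_cast (Ne.symm hv))
  have hb : (0:ℝ) < (2 * (v:ℝ))⁻¹ := by positivity
  have h0 : Integrable (fun y : ℝ => gaussianPDFReal 0 v y * y) := by
    have h := (integrable_mul_exp_neg_mul_sq hb).const_mul (√(2 * π * (v:ℝ)))⁻¹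
    refine h.congr (ae_of_all _ fun y => ?_)
    simp only [gaussianPDFReal_def]
    have harg : -(2 * (v:ℝ))⁻¹ * y ^ 2 = -(y - 0) ^ 2 / (2 * (v:ℝ)) := by
      field_simp
      ring
    rw [harg]
    ring
  have h0' : Integrable (fun y : ℝ => gaussianPDFReal 0 v y * (y + μ)) := by
    have h := h0.add ((integrable_gaussianPDFReal 0 v).const_mul μ)
    refine h.congr (ae_of_all _ fun y => ?_)
    simp only [Pi.add_apply]
    ring
  have h := h0'.comp_sub_right μ
  refine h.congr (ae_of_all _ fun x => ?_)
  simp only []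
  rw [gaussianPDFReal_sub x μ, zero_add, sub_add_cancel]

lemma aux_integral_id_mul_gaussianPDFReal (μ : ℝ) (v : ℝ≥0) (hv : v ≠ 0) :
    ∫ x, gaussianPDFReal μ v x * x = μ := by
  have h0 : Integrable (fun y : ℝ => gaussianPDFReal 0 v y * y) := by
    simpa using aux_integrable_id_mul_gaussianPDFReal 0 v hv
  have hshift : ∫ x, gaussianPDFReal μ v x * x
      = ∫ y, gaussianPDFReal 0 v y * (y + μ) := by
    rw [← integral_add_right_eq_self (fun x => gaussianPDFReal μ v x * x) μ]
    congr 1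
    funext y
    rw [gaussianPDFReal_add y μ, sub_self]
  rw [hshift]
  have hsplit : ∀ y : ℝ, gaussianPDFReal 0 v y * (y + μ)
      = gaussianPDFReal 0 v y * y + μ * gaussianPDFReal 0 v y := by
    intro y; ring
  rw [integral_congr_ae (ae_of_all _ hsplit),
    integral_add h0 ((integrable_gaussianPDFReal 0 v).const_mul μ)]
  have hodd : ∫ y, gaussianPDFReal 0 v y * y = 0 := by
    have hneg := integral_neg_eq_self (fun y : ℝ => gaussianPDFReal 0 v y * y) volume
    have hoddf : ∀ y : ℝ, gaussianPDFReal 0 v (-y) * (-y)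
        = -(gaussianPDFReal 0 v y * y) := by
      intro y
      have h : gaussianPDFReal 0 v (-y) = gaussianPDFReal 0 v y := by
        simp only [gaussianPDFReal_def]
        norm_num
      rw [h]; ring
    rw [integral_congr_ae (ae_of_all _ hoddf), integral_neg] at hneg
    linarith
  rw [hodd, integral_const_mul, integral_gaussianPDFReal_eq_one 0 hv]
  ring

lemma aux_pdf_eq (μ : ℝ) (v : ℝ≥0) :
    gaussianPDF μ v = fun x => ((gaussianPDFReal μ v x).toNNReal : ℝ≥0∞) := rfl

lemma aux_integrable_id_gaussianReal (μ : ℝ) (v : ℝ≥0) (hv : v ≠ 0) :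
    Integrable (fun x => x) (gaussianReal μ v) := by
  rw [gaussianReal_of_var_ne_zero _ hv, aux_pdf_eq μ v,
    integrable_withDensity_iff_integrable_smul
      ((measurable_gaussianPDFReal μ v).real_toNNReal)]
  refine (aux_integrable_id_mul_gaussianPDFReal μ v hv).congr (ae_of_all _ fun x => ?_)
  simp [NNReal.smul_def, Real.coe_toNNReal _ (gaussianPDFReal_nonneg μ v x)]

lemma aux_integral_id_gaussianReal (μ : ℝ) (v : ℝ≥0) (hv : v ≠ 0) :
    ∫ x, x ∂(gaussianReal μ v) = μ := by
  rw [gaussianReal_of_var_ne_zero _ hv, aux_pdf_eq μ v,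
    integral_withDensity_eq_integral_smul
      ((measurable_gaussianPDFReal μ v).real_toNNReal) (fun x => x)]
  have h : (fun x : ℝ => (gaussianPDFReal μ v x).toNNReal • x)
      = fun x => gaussianPDFReal μ v x * x := by
    funext x
    simp [NNReal.smul_def, Real.coe_toNNReal _ (gaussianPDFReal_nonneg μ v x)]
  rw [h, aux_integral_id_mul_gaussianPDFReal μ v hv]

/-- `v̂₁₂ = 2 ∑ j, σΓ j ⁻⁴ σγ j ² γ̂ j Γ̂ j` is an unbiased estimator
of `v₁₂ = Cov(θ̂₁, θ̂₂) = 2 β₀ ∑ j, σΓ j ⁻⁴ σγ j ² γ j ²`. -/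
theorem v12hat_unbiased
{Ω : Type*} [MeasureSpace Ω] [IsProbabilityMeasure (ℙ : Measure Ω)]
    (p : ℕ) (hp : 1 ≤ p) (γ : Fin p → ℝ) (β₀ : ℝ)
    (σγ σΓ : Fin p → ℝ) (hσγ : ∀ j, 0 < σγ j) (hσΓ : ∀ j, 0 < σΓ j)
    (γhat Γhat : Fin p → Ω → ℝ)
    (hindep : iIndepFun
      (Sum.elim γhat Γhat : Fin p ⊕ Fin p → Ω → ℝ) ℙ)
    (hγ : ∀ j, Measure.map (γhat j) ℙ = gaussianReal (γ j) ⟨(σγ j) ^ 2, sq_nonneg _⟩)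
    (hΓ : ∀ j, Measure.map (Γhat j) ℙ = gaussianReal (β₀ * γ j) ⟨(σΓ j) ^ 2, sq_nonneg _⟩) :
    (∫ ω, 2 * ∑ j, ((σΓ j) ^ 4)⁻¹ * ((σγ j) ^ 2 * (γhat j ω * Γhat j ω)) ∂ℙ)
      = 2 * β₀ * ∑ j, ((σΓ j) ^ 4)⁻¹ * ((σγ j) ^ 2 * (γ j) ^ 2) := by
  have hvγ : ∀ j, (⟨(σγ j) ^ 2, sq_nonneg _⟩ : ℝ≥0) ≠ 0 := fun j h =>
    pow_ne_zero 2 (hσγ j).ne' (congrArg NNReal.toReal h)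
  have hvΓ : ∀ j, (⟨(σΓ j) ^ 2, sq_nonneg _⟩ : ℝ≥0) ≠ 0 := fun j h =>
    pow_ne_zero 2 (hσΓ j).ne' (congrArg NNReal.toReal h)
  have haeγ : ∀ j, AEMeasurable (γhat j) ℙ := fun j => by
    by_contra h
    have h0 := Measure.map_of_not_aemeasurable h
    rw [hγ j] at h0
    exact @IsProbabilityMeasure.ne_zero _ _ _ (instIsProbabilityMeasureGaussianReal _ _) h0
  have haeΓ : ∀ j, AEMeasurable (Γhat j) ℙ := fun j => by
    by_contra h
    have h0 := Measure.map_of_not_aemeasurable h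
    rw [hΓ j] at h0
    exact @IsProbabilityMeasure.ne_zero _ _ _ (instIsProbabilityMeasureGaussianReal _ _) h0
  have hintγ : ∀ j, Integrable (γhat j) ℙ := fun j => by
    have h := aux_integrable_id_gaussianReal (γ j) _ (hvγ j)
    rw [← hγ j] at h
    exact (integrable_map_measure aestronglyMeasurable_id (haeγ j)).mp h
  have hintΓ : ∀ j, Integrable (Γhat j) ℙ := fun j => by
    have h := aux_integrable_id_gaussianReal (β₀ * γ j) _ (hvΓ j)
    rw [← hΓ j] at h
    exact (integrable_map_measure aestronglyMeasurable_id (haeΓ j)).mp h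
  have hEγ : ∀ j, ∫ ω, γhat j ω ∂ℙ = γ j := fun j => by
    calc ∫ ω, γhat j ω ∂ℙ = ∫ x, x ∂(Measure.map (γhat j) ℙ) :=
          (integral_map (haeγ j) aestronglyMeasurable_id).symm
      _ = γ j := by rw [hγ j]; exact aux_integral_id_gaussianReal _ _ (hvγ j)
  have hEΓ : ∀ j, ∫ ω, Γhat j ω ∂ℙ = β₀ * γ j := fun j => by
    calc ∫ ω, Γhat j ω ∂ℙ = ∫ x, x ∂(Measure.map (Γhat j) ℙ) :=
          (integral_map (haeΓ j) aestronglyMeasurable_id).symm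
      _ = β₀ * γ j := by rw [hΓ j]; exact aux_integral_id_gaussianReal _ _ (hvΓ j)
  have hind : ∀ j, IndepFun (γhat j) (Γhat j) ℙ := fun j =>
    hindep.indepFun (show (Sum.inl j : Fin p ⊕ Fin p) ≠ Sum.inr j by simp)
  have hmul : ∀ j, Integrable (fun ω => γhat j ω * Γhat j ω) ℙ := fun j =>
    (hind j).integrable_mul (hintγ j) (hintΓ j)
  have hEmul : ∀ j, ∫ ω, γhat j ω * Γhat j ω ∂ℙ = γ j * (β₀ * γ j) := fun j => by
    have h := (hind j).integral_fun_mul_eq_mul_integral (hintγ j).1 (hintΓ j).1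
    rw [← hEΓ j, ← hEγ j]
    simpa using h
  rw [integral_const_mul,
    integral_finset_sum Finset.univ
      (fun j _ => ((hmul j).const_mul ((σγ j) ^ 2)).const_mul (((σΓ j) ^ 4)⁻¹))]
  have hterm : ∀ j, ∫ ω, ((σΓ j) ^ 4)⁻¹ * ((σγ j) ^ 2 * (γhat j ω * Γhat j ω)) ∂ℙ
      = ((σΓ j) ^ 4)⁻¹ * ((σγ j) ^ 2 * (γ j * (β₀ * γ j))) := fun j => by
    rw [integral_const_mul, integral_const_mul, hEmul j]
  rw [Finset.sum_congr rfl (fun j _ => hterm j), Finset.mul_sum, Finset.mul_sum]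
  exact Finset.sum_congr rfl fun j _ => by ring
end

section
/- The statistic v̂₁ = Σ_{j=1}^p σ_{Γ,j}^{-4}(σ_{γ,j}² Γ̂_j² + σ_{Γ,j}² γ̂_j² − σ_{γ,j}² σ_{Γ,j}²) is an unbiased estimator of v₁ = Var(θ̂₁): E[v̂₁] = Σ_{j=1}^p σ_{Γ,j}^{-4}(β₀² σ_{γ,j}² γ_j² + σ_{Γ,j}² γ_j² + σ_{γ,j}² σ_{Γ,j}²). -/
open MeasureTheory ProbabilityTheory Real Filter Set Topology NNReal ENNReal

lemma my_integrable_sq_mul_exp {b : ℝ} (hb : 0 < b) :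
    Integrable (fun x : ℝ => x ^ 2 * Real.exp (-b * x ^ 2)) := by
  have h := integrable_rpow_mul_exp_neg_mul_sq hb (s := (2 : ℕ)) (by norm_num)
  simpa [Real.rpow_natCast] using h

lemma my_integral_odd_exp (b : ℝ) :
    ∫ x : ℝ, x * Real.exp (-b * x ^ 2) = 0 := by
  have h := integral_neg_eq_self (fun x : ℝ => x * Real.exp (-b * x ^ 2)) volume
  simp only [neg_mul, neg_sq] at h
  have h2 : ∫ x : ℝ, -(x * Real.exp (-b * x ^ 2)) =
      ∫ x : ℝ, x * Real.exp (-b * x ^ 2) := by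
    simpa using h
  rw [integral_neg] at h2
  linarith

lemma my_integral_sq_mul_exp {b : ℝ} (hb : 0 < b) :
    ∫ x : ℝ, x ^ 2 * Real.exp (-b * x ^ 2) = Real.sqrt (π / b) / (2 * b) := by
  set F : ℝ → ℝ := fun x => x * Real.exp (-b * x ^ 2) with hF
  set F' : ℝ → ℝ := fun x => (1 - 2 * b * x ^ 2) * Real.exp (-b * x ^ 2) with hF'
  have hderiv : ∀ x : ℝ, HasDerivAt F (F' x) x := by
    intro x
    have h1 : HasDerivAt (fun x : ℝ => -b * x ^ 2) (-b * (2 * x)) x := by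
      simpa using ((hasDerivAt_pow 2 x).const_mul (-b))
    have h2 := (h1.exp)
    have h3 : HasDerivAt (fun y => id y * Real.exp (-b * y ^ 2)) _ x := (hasDerivAt_id x).mul h2
    convert h3 using 1
    · rfl
    simp [F', Real.exp_ne_zero]
    ring
  have hint1 : Integrable (fun x : ℝ => Real.exp (-b * x ^ 2)) :=
    integrable_exp_neg_mul_sq hb
  have hint2 := my_integrable_sq_mul_exp hb
  have hintF' : Integrable F' := by
    have : F' = fun x => Real.exp (-b * x ^ 2)
        - (2 * b) * (x ^ 2 * Real.exp (-b * x ^ 2)) := by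
      funext x; simp [F']; ring
    rw [this]
    exact hint1.sub (hint2.const_mul _)
  have htop : Tendsto F atTop (𝓝 0) := by
    have ho := rpow_mul_exp_neg_mul_sq_isLittleO_exp_neg hb 1
    have hF1 : F = fun x : ℝ => x ^ (1 : ℝ) * Real.exp (-b * x ^ 2) := by
      funext x; simp [F, Real.rpow_one]
    rw [hF1]
    have hhalf : Tendsto (fun x : ℝ => Real.exp (-(1/2) * x)) atTop (𝓝 0) := by
      have h2 : Tendsto (fun x : ℝ => (1/2 : ℝ) * x) atTop atTop :=
        Tendsto.const_mul_atTop (by norm_num) tendsto_id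
      exact (Real.tendsto_exp_neg_atTop_nhds_zero.comp h2).congr
        (fun x => by simp [Function.comp])
    exact ho.trans_tendsto hhalf
  have hbot : Tendsto F atBot (𝓝 0) := by
    have h := htop.comp tendsto_neg_atBot_atTop
    have : (F ∘ fun x : ℝ => -x) = fun x => -F x := by
      funext x; simp [F]
    rw [this] at h
    simpa using h.neg
  have h1 : ∫ x in Iic (0 : ℝ), F' x = F 0 - 0 :=
    integral_Iic_of_hasDerivAt_of_tendsto' (fun x _ => hderiv x)
      hintF'.integrableOn hbot
  have h2 : ∫ x in Ioi (0 : ℝ), F' x = 0 - F 0 :=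
    integral_Ioi_of_hasDerivAt_of_tendsto' (fun x _ => hderiv x)
      hintF'.integrableOn htop
  have h3 : ∫ x : ℝ, F' x = 0 := by
    rw [← intervalIntegral.integral_Iic_add_Ioi (b := (0:ℝ)) hintF'.integrableOn hintF'.integrableOn,
      h1, h2]
    ring
  have h4 : ∫ x : ℝ, F' x =
      (∫ x : ℝ, Real.exp (-b * x ^ 2))
        - (2 * b) * ∫ x : ℝ, x ^ 2 * Real.exp (-b * x ^ 2) := by
    rw [← integral_const_mul, ← integral_sub hint1 (hint2.const_mul _)]
    congr 1; funext x; simp [F']; ring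
  rw [h3, integral_gaussian] at h4
  field_simp at h4 ⊢
  linarith

lemma gaussian_density_integral {m : ℝ} {v : ℝ≥0} (hv : v ≠ 0) (g : ℝ → ℝ) :
    ∫ x, g x ∂(gaussianReal m v)
      = ∫ x, gaussianPDFReal m v x * g x := by
  rw [gaussianReal_of_var_ne_zero _ hv]
  have hmeq : gaussianPDF m v = fun x => ((gaussianPDFReal m v x).toNNReal : ℝ≥0∞) := by
    funext x; rfl
  rw [hmeq, integral_withDensity_eq_integral_smul
    (measurable_gaussianPDFReal m v).real_toNNReal g]
  congr 1; funext x
  simp [NNReal.smul_def, Real.coe_toNNReal _ (gaussianPDFReal_nonneg m v x)]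

lemma gaussianPDFReal_shift (m : ℝ) (v : ℝ≥0) (y : ℝ) :
    gaussianPDFReal m v (y + m)
      = (Real.sqrt (2 * π * v))⁻¹ * Real.exp (-(2 * (v : ℝ))⁻¹ * y ^ 2) := by
  simp only [gaussianPDFReal, add_sub_cancel_right]
  congr 1
  rw [Real.exp_eq_exp]
  ring

lemma gaussian_sq_int {v : ℝ≥0} (m : ℝ) (hv : v ≠ 0) :
    Integrable (fun x : ℝ => gaussianPDFReal m v x * x ^ 2) ∧
      ∫ x : ℝ, gaussianPDFReal m v x * x ^ 2 = m ^ 2 + (v : ℝ) := by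
  have hv' : 0 < (v : ℝ) := by
    exact_mod_cast zero_lt_iff.mpr hv
  set b : ℝ := (2 * (v : ℝ))⁻¹ with hbdef
  set c : ℝ := (Real.sqrt (2 * π * v))⁻¹ with hcdef
  have hb : 0 < b := by positivity
  have hπb : π / b = 2 * π * (v : ℝ) := by
    rw [hbdef]; field_simp
  have hc1 : c * Real.sqrt (π / b) = 1 := by
    rw [hπb, hcdef]
    exact inv_mul_cancel₀ (ne_of_gt (Real.sqrt_pos.mpr (by positivity)))
  have h2b : (2 * b)⁻¹ = (v : ℝ) := by
    rw [hbdef]; field_simp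
  set g0 : ℝ → ℝ := fun y => c * Real.exp (-b * y ^ 2) * (y + m) ^ 2 with hg0def
  have hg0eq : g0 = fun y => c * (y ^ 2 * Real.exp (-b * y ^ 2))
      + (2 * m * c) * (y * Real.exp (-b * y ^ 2))
      + (m ^ 2 * c) * Real.exp (-b * y ^ 2) := by
    funext y; simp only [g0]; ring
  have hint1 := (my_integrable_sq_mul_exp hb).const_mul c
  have hint2 := (integrable_mul_exp_neg_mul_sq hb).const_mul (2 * m * c)
  have hint3 := (integrable_exp_neg_mul_sq hb).const_mul (m ^ 2 * c)
  have hg0int : Integrable g0 := by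
    rw [hg0eq]; exact (hint1.add hint2).add hint3
  have hg0val : ∫ y : ℝ, g0 y = m ^ 2 + (v : ℝ) := by
    have hint12 : Integrable (fun y : ℝ => c * (y ^ 2 * Real.exp (-b * y ^ 2))
        + (2 * m * c) * (y * Real.exp (-b * y ^ 2))) := hint1.add hint2
    rw [hg0eq, integral_add hint12 hint3, integral_add hint1 hint2,
      integral_const_mul, integral_const_mul, integral_const_mul,
      my_integral_sq_mul_exp hb, my_integral_odd_exp b, integral_gaussian]
    have e1 : c * (Real.sqrt (π / b) / (2 * b)) = (v : ℝ) := by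
      rw [div_eq_mul_inv, ← mul_assoc, hc1, one_mul, h2b]
    have e2 : m ^ 2 * c * Real.sqrt (π / b) = m ^ 2 := by
      rw [mul_assoc, hc1, mul_one]
    rw [e1, e2]; ring
  have hshift : ∀ y : ℝ, gaussianPDFReal m v (y + m) * (y + m) ^ 2 = g0 y := by
    intro y
    rw [gaussianPDFReal_shift m v y]
  have hpdfsq : (fun x : ℝ => gaussianPDFReal m v x * x ^ 2)
      = fun x => g0 (x - m) := by
    funext x
    rw [← hshift (x - m), sub_add_cancel]
  constructor
  · rw [hpdfsq]
    exact hg0int.comp_sub_right m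
  · rw [hpdfsq]
    rw [← hg0val]
    exact integral_sub_right_eq_self g0 m

lemma gaussianReal_sq {v : ℝ≥0} (m : ℝ) (hv : v ≠ 0) :
    Integrable (fun x : ℝ => x ^ 2) (gaussianReal m v) ∧
      ∫ x, x ^ 2 ∂(gaussianReal m v) = m ^ 2 + (v : ℝ) := by
  obtain ⟨hint, hval⟩ := gaussian_sq_int m hv
  constructor
  · rw [gaussianReal_of_var_ne_zero _ hv]
    have hmeq : gaussianPDF m v = fun x => ((gaussianPDFReal m v x).toNNReal : ℝ≥0∞) := by
      funext x; rfl
    rw [hmeq, integrable_withDensity_iff_integrable_smul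
      (measurable_gaussianPDFReal m v).real_toNNReal]
    refine hint.congr (Filter.EventuallyEq.of_eq ?_)
    funext x
    simp [NNReal.smul_def, Real.coe_toNNReal _ (gaussianPDFReal_nonneg m v x)]
  · rw [gaussian_density_integral hv]
    exact hval

lemma sq_moment {Ω : Type*} [MeasureSpace Ω] [IsProbabilityMeasure (ℙ : Measure Ω)]
    {X : Ω → ℝ} {m : ℝ} {v : ℝ≥0} (hv : v ≠ 0)
    (hX : Measure.map X ℙ = gaussianReal m v) :
    Integrable (fun ω => (X ω) ^ 2) ℙ ∧ ∫ ω, (X ω) ^ 2 ∂ℙ = m ^ 2 + (v : ℝ) := by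
  have hXm : AEMeasurable X ℙ := aemeasurable_of_map_neZero (by rw [hX]; infer_instance)
  have hmeas : AEStronglyMeasurable (fun x : ℝ => x ^ 2) (Measure.map X ℙ) :=
    (measurable_id.pow_const 2).aestronglyMeasurable
  obtain ⟨hint, hval⟩ := gaussianReal_sq m hv
  constructor
  · exact (integrable_map_measure hmeas hXm).mp (by rw [hX]; exact hint)
  · rw [← integral_map hXm hmeas, hX, hval]


/-- `v̂₁ = ∑ j, σΓ j ⁻⁴ (σγ j ² Γ̂ j ² + σΓ j ² γ̂ j ² - σγ j ² σΓ j ²)`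
is an unbiased estimator of
`v₁ = Var(θ̂₁) = ∑ j, σΓ j ⁻⁴ (β₀² σγ j ² γ j ² + σΓ j ² γ j ² + σγ j ² σΓ j ²)`. -/
theorem v1hat_unbiased
{Ω : Type*} [MeasureSpace Ω] [IsProbabilityMeasure (ℙ : Measure Ω)]
    (p : ℕ) (hp : 1 ≤ p) (γ : Fin p → ℝ) (β₀ : ℝ)
    (σγ σΓ : Fin p → ℝ) (hσγ : ∀ j, 0 < σγ j) (hσΓ : ∀ j, 0 < σΓ j)
    (γhat Γhat : Fin p → Ω → ℝ)
    (hindep : iIndepFun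
      (Sum.elim γhat Γhat : Fin p ⊕ Fin p → Ω → ℝ) ℙ)
    (hγ : ∀ j, Measure.map (γhat j) ℙ = gaussianReal (γ j) ⟨(σγ j) ^ 2, sq_nonneg _⟩)
    (hΓ : ∀ j, Measure.map (Γhat j) ℙ = gaussianReal (β₀ * γ j) ⟨(σΓ j) ^ 2, sq_nonneg _⟩) :
    (∫ ω, ∑ j, ((σΓ j) ^ 4)⁻¹ *
        ((σγ j) ^ 2 * (Γhat j ω) ^ 2 + (σΓ j) ^ 2 * (γhat j ω) ^ 2
          - (σγ j) ^ 2 * (σΓ j) ^ 2) ∂ℙ)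
      = ∑ j, ((σΓ j) ^ 4)⁻¹ *
          (β₀ ^ 2 * (σγ j) ^ 2 * (γ j) ^ 2 + (σΓ j) ^ 2 * (γ j) ^ 2
            + (σγ j) ^ 2 * (σΓ j) ^ 2) := by
  have hvγ : ∀ j, (⟨(σγ j) ^ 2, sq_nonneg _⟩ : ℝ≥0) ≠ 0 := by
    intro j h
    exact pow_ne_zero 2 (hσγ j).ne' (congrArg Subtype.val h)
  have hvΓ : ∀ j, (⟨(σΓ j) ^ 2, sq_nonneg _⟩ : ℝ≥0) ≠ 0 := by
    intro j h
    exact pow_ne_zero 2 (hσΓ j).ne' (congrArg Subtype.val h)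
  have hγm := fun j => sq_moment (hvγ j) (hγ j)
  have hΓm := fun j => sq_moment (hvΓ j) (hΓ j)
  have hintj : ∀ j : Fin p, Integrable (fun ω => ((σΓ j) ^ 4)⁻¹ *
      ((σγ j) ^ 2 * (Γhat j ω) ^ 2 + (σΓ j) ^ 2 * (γhat j ω) ^ 2
        - (σγ j) ^ 2 * (σΓ j) ^ 2)) ℙ := fun j =>
    ((((hΓm j).1.const_mul _).add ((hγm j).1.const_mul _)).sub
      (integrable_const _)).const_mul _
  rw [integral_finset_sum _ (fun j _ => hintj j)]
  refine Finset.sum_congr rfl (fun j _ => ?_)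
  have h12 : Integrable (fun ω => (σγ j) ^ 2 * (Γhat j ω) ^ 2
      + (σΓ j) ^ 2 * (γhat j ω) ^ 2) ℙ :=
    ((hΓm j).1.const_mul _).add ((hγm j).1.const_mul _)
  rw [integral_const_mul, integral_sub h12
    (integrable_const _), integral_add ((hΓm j).1.const_mul _) ((hγm j).1.const_mul _),
    integral_const_mul, integral_const_mul, (hΓm j).2, (hγm j).2, integral_const]
  simp only [measure_univ, ENNReal.toReal_one, smul_eq_mul, one_mul, NNReal.coe_mk, probReal_univ]
  change (σΓ j ^ 4)⁻¹ * (σγ j ^ 2 * ((β₀ * γ j) ^ 2 + σΓ j ^ 2)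
    + σΓ j ^ 2 * (γ j ^ 2 + σγ j ^ 2) - σγ j ^ 2 * σΓ j ^ 2) = _
  ring
end

section
/- Order of the key ratio v₂/θ₂² (auxiliary bound in the proof of Theorem 1): for all constants 0 < c₁ ≤ c₂, for every integer p ≥ 1 and all parameters with c₁ ≤ σ_{γ,j}²/σ_{Γ,j}² ≤ c₂ for every j and κ = (1/p) Σ_{j=1}^p σ_{γ,j}^{-2} γ_j² > 0, one has v₂/θ₂² ≤ 4 (c₂/c₁)² φ, where ψ = κ√p and φ = (ψ√p)^{-1} + ψ^{-2}. -/
open Finset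

/-- `θ₂ = ∑ j, σΓ j ⁻² γ j ²`, the expectation of the denominator of the dIVW
estimator. -/
noncomputable def theta2 (p : ℕ) (γ σΓ : Fin p → ℝ) : ℝ :=
  ∑ j, ((σΓ j) ^ 2)⁻¹ * (γ j) ^ 2

/-- `v₂ = ∑ j, σΓ j ⁻⁴ (4 σγ j ² γ j ² + 2 σγ j ⁴)`, the variance of the
denominator of the dIVW estimator. -/
noncomputable def v2 (p : ℕ) (γ σγ σΓ : Fin p → ℝ) : ℝ :=
  ∑ j, ((σΓ j) ^ 4)⁻¹ * (4 * (σγ j) ^ 2 * (γ j) ^ 2 + 2 * (σγ j) ^ 4)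

/-- `κ = (1/p) ∑ j, σγ j ⁻² γ j ²`, the average IV strength. -/
noncomputable def kappa (p : ℕ) (γ σγ : Fin p → ℝ) : ℝ :=
  (p : ℝ)⁻¹ * ∑ j, ((σγ j) ^ 2)⁻¹ * (γ j) ^ 2

/-- `ψ = κ √p`, the effective sample size. -/
noncomputable def psi (p : ℕ) (γ σγ : Fin p → ℝ) : ℝ :=
  kappa p γ σγ * Real.sqrt p

/-- `φ = (ψ √p)⁻¹ + ψ⁻²`. -/
noncomputable def phi (p : ℕ) (γ σγ : Fin p → ℝ) : ℝ :=
  (psi p γ σγ * Real.sqrt p)⁻¹ + ((psi p γ σγ) ^ 2)⁻¹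

set_option maxHeartbeats 1000000 in
/-- auxiliary bound in the proof of Theorem 1: if
`c₁ ≤ σγ j ² / σΓ j ² ≤ c₂` for all `j` with `0 < c₁ ≤ c₂`, and `κ > 0`, then
`v₂ / θ₂² ≤ 4 (c₂ / c₁)² φ`. -/
theorem v2_over_theta2_sq_order (c₁ c₂ : ℝ) (hc₁ : 0 < c₁) (hc : c₁ ≤ c₂)
    (p : ℕ) (hp : 1 ≤ p) (γ σγ σΓ : Fin p → ℝ)
    (hσγ : ∀ j, 0 < σγ j) (hσΓ : ∀ j, 0 < σΓ j)
    (hratio : ∀ j, c₁ ≤ (σγ j) ^ 2 / (σΓ j) ^ 2 ∧ (σγ j) ^ 2 / (σΓ j) ^ 2 ≤ c₂)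
    (hκ : 0 < kappa p γ σγ) :
    v2 p γ σγ σΓ / (theta2 p γ σΓ) ^ 2 ≤ 4 * (c₂ / c₁) ^ 2 * phi p γ σγ := by
  have hp' : 0 < (p:ℝ) := by exact_mod_cast Nat.lt_of_lt_of_le Nat.zero_lt_one hp
  set K : ℝ := ∑ j, ((σγ j) ^ 2)⁻¹ * (γ j) ^ 2 with hKdef
  have hκK : kappa p γ σγ = (p:ℝ)⁻¹ * K := rfl
  have hKpos : 0 < K := by
    have h := hκ
    rw [hκK] at h
    nlinarith [inv_pos.mpr hp']
  -- bound on theta2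
  have hθ : c₁ * K ≤ theta2 p γ σΓ := by
    rw [theta2, hKdef, Finset.mul_sum]
    apply Finset.sum_le_sum
    intro j _
    have h1 := (hratio j).1
    have hA : (0:ℝ) < (σΓ j)^2 := pow_pos (hσΓ j) 2
    have hB : (0:ℝ) < (σγ j)^2 := pow_pos (hσγ j) 2
    rw [le_div_iff₀ hA] at h1
    have key : c₁ * ((σγ j)^2)⁻¹ ≤ ((σΓ j)^2)⁻¹ := by
      rw [← div_eq_mul_inv, ← one_div, div_le_div_iff₀ hB hA]
      nlinarith
    nlinarith [sq_nonneg (γ j), key]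
  have hθpos : 0 < theta2 p γ σΓ := lt_of_lt_of_le (by positivity) hθ
  -- bound on v2
  have hv : v2 p γ σγ σΓ ≤ c₂ ^ 2 * (4 * K + 2 * p) := by
    have step : v2 p γ σγ σΓ ≤ ∑ j, c₂ ^ 2 * (4 * ((σγ j)^2)⁻¹ * (γ j)^2 + 2) := by
      rw [v2]
      apply Finset.sum_le_sum
      intro j _
      have h2 := (hratio j).2
      have h1 := (hratio j).1
      have hA : (0:ℝ) < (σΓ j)^2 := pow_pos (hσΓ j) 2
      have hB : (0:ℝ) < (σγ j)^2 := pow_pos (hσγ j) 2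
      have heq : ((σΓ j) ^ 4)⁻¹ * (4 * (σγ j) ^ 2 * (γ j) ^ 2 + 2 * (σγ j) ^ 4)
          = ((σγ j)^2 / (σΓ j)^2)^2 * (4 * ((σγ j)^2)⁻¹ * (γ j)^2 + 2) := by
        have hA' : (σΓ j) ≠ 0 := ne_of_gt (hσΓ j)
        have hB' : (σγ j) ≠ 0 := ne_of_gt (hσγ j)
        field_simp
      rw [heq]
      have ha : 0 ≤ (σγ j)^2 / (σΓ j)^2 := by positivity
      have hsq : ((σγ j)^2 / (σΓ j)^2)^2 ≤ c₂ ^ 2 := by nlinarith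
      have ht : 0 ≤ 4 * ((σγ j)^2)⁻¹ * (γ j)^2 + 2 := by positivity
      nlinarith
    calc v2 p γ σγ σΓ ≤ ∑ j, c₂ ^ 2 * (4 * ((σγ j)^2)⁻¹ * (γ j)^2 + 2) := step
      _ = c₂ ^ 2 * (4 * K + 2 * p) := by
          rw [← Finset.mul_sum]
          congr 1
          rw [Finset.sum_add_distrib, Finset.sum_const, Finset.card_univ, Fintype.card_fin,
            nsmul_eq_mul, hKdef, Finset.mul_sum]
          congr 1
          · exact Finset.sum_congr rfl fun j _ => by ring
          · ring
  -- compute phi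
  have hsqrt : Real.sqrt p * Real.sqrt p = p := Real.mul_self_sqrt (le_of_lt hp')
  have hphi : phi p γ σγ = K⁻¹ + p * (K^2)⁻¹ := by
    rw [phi, psi, hκK]
    have h1 : (p:ℝ)⁻¹ * K * Real.sqrt p * Real.sqrt p = K := by
      rw [mul_assoc, hsqrt]; field_simp
    rw [h1]
    have h2 : ((p:ℝ)⁻¹ * K * Real.sqrt p)^2 = (p:ℝ)⁻¹ * K^2 := by
      rw [mul_pow, mul_pow, sq (Real.sqrt p), hsqrt]
      field_simp
    rw [h2]
    rw [mul_inv, inv_inv]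
  rw [hphi]
  -- final inequality
  have hstep : v2 p γ σγ σΓ / (theta2 p γ σΓ) ^ 2 ≤ c₂ ^ 2 * (4 * K + 2 * p) / (c₁ * K)^2 := by
    apply div_le_div₀ (by positivity) hv (by positivity)
    exact pow_le_pow_left₀ (by positivity) hθ 2
  refine le_trans hstep ?_
  have hKne : K ≠ 0 := ne_of_gt hKpos
  have hEq : 4 * (c₂ / c₁) ^ 2 * (K⁻¹ + (p:ℝ) * (K ^ 2)⁻¹)
      = c₂ ^ 2 * (4 * K + 4 * p) / (c₁ * K) ^ 2 := by
    field_simp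
  rw [hEq]
  apply (div_le_div_iff_of_pos_right (by positivity)).mpr
  nlinarith [sq_nonneg c₂, mul_nonneg (sq_nonneg c₂) (le_of_lt hp')]
end

section
/- Order of the leading variance-reduction term of the mdIVW estimator (quantitative form of Theorem 1(b)): for all constants 0 < c₁ ≤ c₂ and B > 0 there exists a constant C > 0, depending only on c₁, c₂ and B, such that for every integer p ≥ 1 and all parameters with |β₀| ≤ B, c₁ ≤ σ_{γ,j}²/σ_{Γ,j}² ≤ c₂ for every j, and κ = (1/p) Σ_{j=1}^p σ_{γ,j}^{-2} γ_j² > 0, one has |2β₀²Δ| / θ₂⁴ ≤ C φ², where 2β₀²Δ = 2v₁v₂ − 12β₀ v₁₂ v₂ + 4v₁₂² + 6β₀² v₂² − 2β₀² θ₂ Σ_{j=1}^p σ_{Γ,j}^{-6} σ_{γ,j}⁶ (6 σ_{γ,j}^{-2} γ_j² + 8) − 4 θ₂ Σ_{j=1}^p σ_{Γ,j}^{-4} σ_{γ,j}⁴ (σ_{γ,j}^{-2} γ_j² + 1), and ψ = κ√p, φ = (ψ√p)^{-1} + ψ^{-2}. -/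
open Finset

/-- `v₁ = ∑ j, σΓ j ⁻⁴ (β₀² σγ j ² γ j ² + σΓ j ² γ j ² + σγ j ² σΓ j ²)`,
the variance of the numerator of the dIVW estimator. -/
noncomputable def v1 (p : ℕ) (γ σγ σΓ : Fin p → ℝ) (β₀ : ℝ) : ℝ :=
  ∑ j, ((σΓ j) ^ 4)⁻¹ *
    (β₀ ^ 2 * (σγ j) ^ 2 * (γ j) ^ 2 + (σΓ j) ^ 2 * (γ j) ^ 2
      + (σγ j) ^ 2 * (σΓ j) ^ 2)

/-- `v₁₂ = 2 β₀ ∑ j, σΓ j ⁻⁴ σγ j ² γ j ²`, the covariance of the numerator and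
denominator of the dIVW estimator. -/
noncomputable def v12 (p : ℕ) (γ σγ σΓ : Fin p → ℝ) (β₀ : ℝ) : ℝ :=
  2 * β₀ * ∑ j, ((σΓ j) ^ 4)⁻¹ * ((σγ j) ^ 2 * (γ j) ^ 2)

/-- `2 β₀² Δ`, the leading variance-reduction term (up to `θ₂⁻⁴`) of the mdIVW
estimator in Theorem 1(b). -/
noncomputable def twoBetaSqDelta (p : ℕ) (γ σγ σΓ : Fin p → ℝ) (β₀ : ℝ) : ℝ :=
  2 * v1 p γ σγ σΓ β₀ * v2 p γ σγ σΓ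
    - 12 * β₀ * v12 p γ σγ σΓ β₀ * v2 p γ σγ σΓ
    + 4 * (v12 p γ σγ σΓ β₀) ^ 2
    + 6 * β₀ ^ 2 * (v2 p γ σγ σΓ) ^ 2
    - 2 * β₀ ^ 2 * theta2 p γ σΓ *
        ∑ j, ((σΓ j) ^ 6)⁻¹ * (σγ j) ^ 6 * (6 * ((σγ j) ^ 2)⁻¹ * (γ j) ^ 2 + 8)
    - 4 * theta2 p γ σΓ *
        ∑ j, ((σΓ j) ^ 4)⁻¹ * (σγ j) ^ 4 * (((σγ j) ^ 2)⁻¹ * (γ j) ^ 2 + 1)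

set_option maxHeartbeats 2000000

/-- quantitative form of Theorem 1(b): for all `0 < c₁ ≤ c₂` and
`B > 0` there is a constant `C > 0` depending only on `c₁, c₂, B` such that,
whenever `|β₀| ≤ B`, `c₁ ≤ σγ j ² / σΓ j ² ≤ c₂` for all `j`, and `κ > 0`, the
leading variance-reduction term of the mdIVW estimator satisfies
`|2 β₀² Δ| / θ₂⁴ ≤ C φ²`. -/
theorem mdIVW_variance_reduction_order (c₁ c₂ B : ℝ) (hc₁ : 0 < c₁)
    (hc : c₁ ≤ c₂) (hB : 0 < B) :
    ∃ C : ℝ, 0 < C ∧ ∀ (p : ℕ), 1 ≤ p → ∀ (γ σγ σΓ : Fin p → ℝ) (β₀ : ℝ),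
      (∀ j, 0 < σγ j) → (∀ j, 0 < σΓ j) → |β₀| ≤ B →
      (∀ j, c₁ ≤ (σγ j) ^ 2 / (σΓ j) ^ 2 ∧ (σγ j) ^ 2 / (σΓ j) ^ 2 ≤ c₂) →
      0 < kappa p γ σγ →
      |twoBetaSqDelta p γ σγ σΓ β₀| / (theta2 p γ σΓ) ^ 4
        ≤ C * (phi p γ σγ) ^ 2 := by

  have hc₂ : 0 < c₂ := lt_of_lt_of_le hc₁ hc
  set D : ℝ := 16 * (B + 1) ^ 2 * (c₂ + 1) ^ 3 with hDdef
  have hD : 0 < D := by positivity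
  -- monomial nonnegativity hints for the constant comparisons
  have hm00 : (0:ℝ) ≤ 1 := zero_le_one
  have hDA : B ^ 2 * c₂ ^ 2 + c₂ ≤ D := by
    rw [hDdef]
    nlinarith [mul_nonneg (pow_nonneg hB.le 2) (pow_nonneg hc₂.le 3),
      mul_nonneg (pow_nonneg hB.le 2) (pow_nonneg hc₂.le 2),
      mul_nonneg (pow_nonneg hB.le 2) hc₂.le, pow_nonneg hB.le 2,
      mul_nonneg hB.le (pow_nonneg hc₂.le 3),
      mul_nonneg hB.le (pow_nonneg hc₂.le 2),
      mul_nonneg hB.le hc₂.le, hB.le,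
      pow_nonneg hc₂.le 3, pow_nonneg hc₂.le 2, hc₂.le]
  have hDB : 8 * c₂ ^ 3 ≤ D := by
    rw [hDdef]
    nlinarith [mul_nonneg (pow_nonneg hB.le 2) (pow_nonneg hc₂.le 3),
      mul_nonneg (pow_nonneg hB.le 2) (pow_nonneg hc₂.le 2),
      mul_nonneg (pow_nonneg hB.le 2) hc₂.le, pow_nonneg hB.le 2,
      mul_nonneg hB.le (pow_nonneg hc₂.le 3),
      mul_nonneg hB.le (pow_nonneg hc₂.le 2),
      mul_nonneg hB.le hc₂.le, hB.le,
      pow_nonneg hc₂.le 3, pow_nonneg hc₂.le 2, hc₂.le]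
  have hDC : 4 * c₂ ^ 2 ≤ D := by
    rw [hDdef]
    nlinarith [mul_nonneg (pow_nonneg hB.le 2) (pow_nonneg hc₂.le 3),
      mul_nonneg (pow_nonneg hB.le 2) (pow_nonneg hc₂.le 2),
      mul_nonneg (pow_nonneg hB.le 2) hc₂.le, pow_nonneg hB.le 2,
      mul_nonneg hB.le (pow_nonneg hc₂.le 3),
      mul_nonneg hB.le (pow_nonneg hc₂.le 2),
      mul_nonneg hB.le hc₂.le, hB.le,
      pow_nonneg hc₂.le 3, pow_nonneg hc₂.le 2, hc₂.le]
  have hDc2 : c₂ ^ 2 ≤ D := by nlinarith [sq_nonneg c₂]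
  have hDd : 2 * B * c₂ ^ 2 ≤ D := by
    rw [hDdef]
    nlinarith [mul_nonneg (pow_nonneg hB.le 2) (pow_nonneg hc₂.le 3),
      mul_nonneg (pow_nonneg hB.le 2) (pow_nonneg hc₂.le 2),
      mul_nonneg (pow_nonneg hB.le 2) hc₂.le, pow_nonneg hB.le 2,
      mul_nonneg hB.le (pow_nonneg hc₂.le 3),
      mul_nonneg hB.le (pow_nonneg hc₂.le 2),
      mul_nonneg hB.le hc₂.le, hB.le,
      pow_nonneg hc₂.le 3, pow_nonneg hc₂.le 2, hc₂.le]
  have hDe : c₂ ≤ D := by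
    rw [hDdef]
    nlinarith [mul_nonneg (pow_nonneg hB.le 2) (pow_nonneg hc₂.le 3),
      mul_nonneg (pow_nonneg hB.le 2) (pow_nonneg hc₂.le 2),
      mul_nonneg (pow_nonneg hB.le 2) hc₂.le, pow_nonneg hB.le 2,
      mul_nonneg hB.le (pow_nonneg hc₂.le 3),
      mul_nonneg hB.le (pow_nonneg hc₂.le 2),
      mul_nonneg hB.le hc₂.le, hB.le,
      pow_nonneg hc₂.le 3, pow_nonneg hc₂.le 2, hc₂.le]
  refine ⟨(8 * B ^ 2 + 12 * B + 10) * D ^ 2 / c₁ ^ 4, by positivity, ?_⟩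
  intro p hp γ σγ σΓ β₀ hσγ hσΓ hβ hr hκ
  have hp0 : (0 : ℝ) < p := by exact_mod_cast hp
  set S : ℝ := ∑ j, ((σγ j) ^ 2)⁻¹ * (γ j) ^ 2 with hSdef
  rw [kappa, ← hSdef] at hκ
  have hS : 0 < S := by
    have h := mul_pos hp0 hκ
    rwa [mul_inv_cancel_left₀ (ne_of_gt hp0)] at h
  have hb2 : β₀ ^ 2 ≤ B ^ 2 := by
    nlinarith [sq_abs β₀, abs_nonneg β₀]
  have ha : ∀ j, (0:ℝ) ≤ ((σγ j) ^ 2)⁻¹ * (γ j) ^ 2 := fun j => by positivity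
  -- bounds on theta2
  have hθl : c₁ * S ≤ theta2 p γ σΓ := by
    rw [theta2, hSdef, Finset.mul_sum]
    refine Finset.sum_le_sum fun j _ => ?_
    have hγ0 : σγ j ≠ 0 := (hσγ j).ne'
    have hΓ0 : σΓ j ≠ 0 := (hσΓ j).ne'
    have key : ((σΓ j) ^ 2)⁻¹ * (γ j) ^ 2
        = ((σγ j) ^ 2 / (σΓ j) ^ 2) * (((σγ j) ^ 2)⁻¹ * (γ j) ^ 2) := by
      field_simp
    rw [key]
    exact mul_le_mul_of_nonneg_right (hr j).1 (ha j)
  have hθu : theta2 p γ σΓ ≤ c₂ * S := by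
    rw [theta2, hSdef, Finset.mul_sum]
    refine Finset.sum_le_sum fun j _ => ?_
    have hγ0 : σγ j ≠ 0 := (hσγ j).ne'
    have hΓ0 : σΓ j ≠ 0 := (hσΓ j).ne'
    have key : ((σΓ j) ^ 2)⁻¹ * (γ j) ^ 2
        = ((σγ j) ^ 2 / (σΓ j) ^ 2) * (((σγ j) ^ 2)⁻¹ * (γ j) ^ 2) := by
      field_simp
    rw [key]
    exact mul_le_mul_of_nonneg_right (hr j).2 (ha j)
  have hθn : 0 ≤ theta2 p γ σΓ := le_trans (by positivity) hθl
  have hsumD : ∑ j : Fin p, D * (((σγ j) ^ 2)⁻¹ * (γ j) ^ 2 + 1) = D * (S + p) := by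
    rw [← Finset.mul_sum, Finset.sum_add_distrib, ← hSdef, Finset.sum_const,
      Finset.card_univ, Fintype.card_fin, nsmul_eq_mul, mul_one]
  have hDT : (0:ℝ) ≤ D * (S + p) := by positivity
  -- bound on v1
  have hv1n : 0 ≤ v1 p γ σγ σΓ β₀ := by
    rw [v1]; exact Finset.sum_nonneg fun j _ => by positivity
  have hv1u : v1 p γ σγ σΓ β₀ ≤ D * (S + p) := by
    rw [v1, ← hsumD]
    refine Finset.sum_le_sum fun j _ => ?_
    have hγ0 : σγ j ≠ 0 := (hσγ j).ne'
    have hΓ0 : σΓ j ≠ 0 := (hσΓ j).ne'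
    have key : ((σΓ j) ^ 4)⁻¹ *
        (β₀ ^ 2 * (σγ j) ^ 2 * (γ j) ^ 2 + (σΓ j) ^ 2 * (γ j) ^ 2
          + (σγ j) ^ 2 * (σΓ j) ^ 2)
        = β₀ ^ 2 * ((σγ j) ^ 2 / (σΓ j) ^ 2) ^ 2 * (((σγ j) ^ 2)⁻¹ * (γ j) ^ 2)
          + ((σγ j) ^ 2 / (σΓ j) ^ 2) * (((σγ j) ^ 2)⁻¹ * (γ j) ^ 2)
          + ((σγ j) ^ 2 / (σΓ j) ^ 2) := by
      field_simp
    rw [key]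
    obtain ⟨h1, h2⟩ := hr j
    have hr0 : 0 ≤ (σγ j) ^ 2 / (σΓ j) ^ 2 := le_trans hc₁.le h1
    have e1 : ((σγ j) ^ 2 / (σΓ j) ^ 2) ^ 2 ≤ c₂ ^ 2 := pow_le_pow_left₀ hr0 h2 2
    have e2a : β₀ ^ 2 * ((σγ j) ^ 2 / (σΓ j) ^ 2) ^ 2 ≤ B ^ 2 * c₂ ^ 2 :=
      mul_le_mul hb2 e1 (sq_nonneg _) (sq_nonneg B)
    have e2 := mul_le_mul_of_nonneg_right e2a (ha j)
    have e3 := mul_le_mul_of_nonneg_right h2 (ha j)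
    have e4 := mul_le_mul_of_nonneg_right hDA (ha j)
    linarith only [e2, e3, e4, h2, hDe]
  -- bound on v2
  have hv2n : 0 ≤ v2 p γ σγ σΓ := by
    rw [v2]; exact Finset.sum_nonneg fun j _ => by positivity
  have hv2u : v2 p γ σγ σΓ ≤ D * (S + p) := by
    rw [v2, ← hsumD]
    refine Finset.sum_le_sum fun j _ => ?_
    have hγ0 : σγ j ≠ 0 := (hσγ j).ne'
    have hΓ0 : σΓ j ≠ 0 := (hσΓ j).ne'
    have key : ((σΓ j) ^ 4)⁻¹ * (4 * (σγ j) ^ 2 * (γ j) ^ 2 + 2 * (σγ j) ^ 4)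
        = 4 * ((σγ j) ^ 2 / (σΓ j) ^ 2) ^ 2 * (((σγ j) ^ 2)⁻¹ * (γ j) ^ 2)
          + 2 * ((σγ j) ^ 2 / (σΓ j) ^ 2) ^ 2 := by
      field_simp
    rw [key]
    obtain ⟨h1, h2⟩ := hr j
    have hr0 : 0 ≤ (σγ j) ^ 2 / (σΓ j) ^ 2 := le_trans hc₁.le h1
    have e1 : ((σγ j) ^ 2 / (σΓ j) ^ 2) ^ 2 ≤ c₂ ^ 2 := pow_le_pow_left₀ hr0 h2 2
    have e2 := mul_le_mul_of_nonneg_right e1 (ha j)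
    have e3 := mul_le_mul_of_nonneg_right hDC (ha j)
    have e4 := sq_nonneg c₂
    linarith only [e1, e2, e3, e4, hDC]
  -- bound on v12
  have hWn : 0 ≤ ∑ j, ((σΓ j) ^ 4)⁻¹ * ((σγ j) ^ 2 * (γ j) ^ 2) :=
    Finset.sum_nonneg fun j _ => by positivity
  have hWu : ∑ j, ((σΓ j) ^ 4)⁻¹ * ((σγ j) ^ 2 * (γ j) ^ 2) ≤ c₂ ^ 2 * S := by
    rw [hSdef, Finset.mul_sum]
    refine Finset.sum_le_sum fun j _ => ?_
    have hγ0 : σγ j ≠ 0 := (hσγ j).ne'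
    have hΓ0 : σΓ j ≠ 0 := (hσΓ j).ne'
    have key : ((σΓ j) ^ 4)⁻¹ * ((σγ j) ^ 2 * (γ j) ^ 2)
        = ((σγ j) ^ 2 / (σΓ j) ^ 2) ^ 2 * (((σγ j) ^ 2)⁻¹ * (γ j) ^ 2) := by
      field_simp
    rw [key]
    obtain ⟨h1, h2⟩ := hr j
    have hr0 : 0 ≤ (σγ j) ^ 2 / (σΓ j) ^ 2 := le_trans hc₁.le h1
    have e1 : ((σγ j) ^ 2 / (σΓ j) ^ 2) ^ 2 ≤ c₂ ^ 2 := pow_le_pow_left₀ hr0 h2 2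
    exact mul_le_mul_of_nonneg_right e1 (ha j)
  have hv12 : |v12 p γ σγ σΓ β₀| ≤ D * (S + p) := by
    rw [v12, abs_mul, abs_mul, abs_two, abs_of_nonneg hWn]
    have e1 : |β₀| * ∑ j, ((σΓ j) ^ 4)⁻¹ * ((σγ j) ^ 2 * (γ j) ^ 2)
        ≤ B * (c₂ ^ 2 * S) := mul_le_mul hβ hWu hWn hB.le
    have e2 := mul_le_mul_of_nonneg_right hDd hS.le
    have e3 := mul_nonneg hD.le hp0.le
    linarith only [e1, e2, e3]
  -- bounds on the last two sums
  have hT5n : 0 ≤ ∑ j, ((σΓ j) ^ 6)⁻¹ * (σγ j) ^ 6 *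
      (6 * ((σγ j) ^ 2)⁻¹ * (γ j) ^ 2 + 8) :=
    Finset.sum_nonneg fun j _ => by positivity
  have hT5u : (∑ j, ((σΓ j) ^ 6)⁻¹ * (σγ j) ^ 6 *
      (6 * ((σγ j) ^ 2)⁻¹ * (γ j) ^ 2 + 8)) ≤ D * (S + p) := by
    rw [← hsumD]
    refine Finset.sum_le_sum fun j _ => ?_
    have hγ0 : σγ j ≠ 0 := (hσγ j).ne'
    have hΓ0 : σΓ j ≠ 0 := (hσΓ j).ne'
    have key : ((σΓ j) ^ 6)⁻¹ * (σγ j) ^ 6 * (6 * ((σγ j) ^ 2)⁻¹ * (γ j) ^ 2 + 8)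
        = ((σγ j) ^ 2 / (σΓ j) ^ 2) ^ 3 *
            (6 * (((σγ j) ^ 2)⁻¹ * (γ j) ^ 2) + 8) := by
      field_simp
    rw [key]
    obtain ⟨h1, h2⟩ := hr j
    have hr0 : 0 ≤ (σγ j) ^ 2 / (σΓ j) ^ 2 := le_trans hc₁.le h1
    have e1 : ((σγ j) ^ 2 / (σΓ j) ^ 2) ^ 3 ≤ c₂ ^ 3 := pow_le_pow_left₀ hr0 h2 3
    have e0 : (0:ℝ) ≤ 6 * (((σγ j) ^ 2)⁻¹ * (γ j) ^ 2) + 8 := by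
      have := ha j; linarith
    have e2 := mul_le_mul_of_nonneg_right e1 e0
    have e3 := mul_le_mul_of_nonneg_right hDB (ha j)
    have e4 := mul_nonneg (pow_nonneg hc₂.le 3) (ha j)
    linarith only [e2, e3, e4, hDB]
  have hT6n : 0 ≤ ∑ j, ((σΓ j) ^ 4)⁻¹ * (σγ j) ^ 4 *
      (((σγ j) ^ 2)⁻¹ * (γ j) ^ 2 + 1) :=
    Finset.sum_nonneg fun j _ => by positivity
  have hT6u : (∑ j, ((σΓ j) ^ 4)⁻¹ * (σγ j) ^ 4 *
      (((σγ j) ^ 2)⁻¹ * (γ j) ^ 2 + 1)) ≤ D * (S + p) := by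
    rw [← hsumD]
    refine Finset.sum_le_sum fun j _ => ?_
    have hγ0 : σγ j ≠ 0 := (hσγ j).ne'
    have hΓ0 : σΓ j ≠ 0 := (hσΓ j).ne'
    have key : ((σΓ j) ^ 4)⁻¹ * (σγ j) ^ 4 * (((σγ j) ^ 2)⁻¹ * (γ j) ^ 2 + 1)
        = ((σγ j) ^ 2 / (σΓ j) ^ 2) ^ 2 * ((((σγ j) ^ 2)⁻¹ * (γ j) ^ 2) + 1) := by
      field_simp
    rw [key]
    obtain ⟨h1, h2⟩ := hr j
    have hr0 : 0 ≤ (σγ j) ^ 2 / (σΓ j) ^ 2 := le_trans hc₁.le h1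
    have e1 : ((σγ j) ^ 2 / (σΓ j) ^ 2) ^ 2 ≤ c₂ ^ 2 := pow_le_pow_left₀ hr0 h2 2
    have e0 : (0:ℝ) ≤ (((σγ j) ^ 2)⁻¹ * (γ j) ^ 2) + 1 := by
      have := ha j; linarith
    have e2 := mul_le_mul_of_nonneg_right e1 e0
    have e3 := mul_le_mul_of_nonneg_right hDc2 e0
    linarith only [e2, e3]
  -- theta2 upper bound against D*(S+p)
  have hθu' : theta2 p γ σΓ ≤ D * (S + p) := by
    have e1 := mul_le_mul_of_nonneg_right hDe hS.le
    have e2 := mul_nonneg hD.le hp0.le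
    linarith only [hθu, e1, e2]
  -- product bounds
  have q1 : v1 p γ σγ σΓ β₀ * v2 p γ σγ σΓ ≤ (D * (S + p)) * (D * (S + p)) :=
    mul_le_mul hv1u hv2u hv2n hDT
  have q1n : 0 ≤ v1 p γ σγ σΓ β₀ * v2 p γ σγ σΓ := mul_nonneg hv1n hv2n
  have q2 : |β₀ * v12 p γ σγ σΓ β₀ * v2 p γ σγ σΓ|
      ≤ B * (D * (S + p)) * (D * (S + p)) := by
    rw [abs_mul, abs_mul]
    refine mul_le_mul (mul_le_mul hβ hv12 (abs_nonneg _) hB.le) ?_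
      (abs_nonneg _) (by positivity)
    rw [abs_of_nonneg hv2n]; exact hv2u
  obtain ⟨q2l, q2u⟩ := abs_le.1 q2
  have q3 : (v12 p γ σγ σΓ β₀) ^ 2 ≤ (D * (S + p)) ^ 2 := by
    rw [← sq_abs]
    exact pow_le_pow_left₀ (abs_nonneg _) hv12 2
  have q3n : 0 ≤ (v12 p γ σγ σΓ β₀) ^ 2 := sq_nonneg _
  have q4 : β₀ ^ 2 * (v2 p γ σγ σΓ) ^ 2 ≤ B ^ 2 * (D * (S + p)) ^ 2 :=
    mul_le_mul hb2 (pow_le_pow_left₀ hv2n hv2u 2) (sq_nonneg _) (sq_nonneg B)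
  have q4n : 0 ≤ β₀ ^ 2 * (v2 p γ σγ σΓ) ^ 2 :=
    mul_nonneg (sq_nonneg _) (sq_nonneg _)
  have q5a : theta2 p γ σΓ * (∑ j, ((σΓ j) ^ 6)⁻¹ * (σγ j) ^ 6 *
      (6 * ((σγ j) ^ 2)⁻¹ * (γ j) ^ 2 + 8)) ≤ (D * (S + p)) * (D * (S + p)) :=
    mul_le_mul hθu' hT5u hT5n hDT
  have q5 : β₀ ^ 2 * (theta2 p γ σΓ * (∑ j, ((σΓ j) ^ 6)⁻¹ * (σγ j) ^ 6 *
      (6 * ((σγ j) ^ 2)⁻¹ * (γ j) ^ 2 + 8)))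
      ≤ B ^ 2 * ((D * (S + p)) * (D * (S + p))) :=
    mul_le_mul hb2 q5a (mul_nonneg hθn hT5n) (sq_nonneg B)
  have q5n : 0 ≤ β₀ ^ 2 * (theta2 p γ σΓ * (∑ j, ((σΓ j) ^ 6)⁻¹ * (σγ j) ^ 6 *
      (6 * ((σγ j) ^ 2)⁻¹ * (γ j) ^ 2 + 8))) :=
    mul_nonneg (sq_nonneg _) (mul_nonneg hθn hT5n)
  have q6 : theta2 p γ σΓ * (∑ j, ((σΓ j) ^ 4)⁻¹ * (σγ j) ^ 4 *
      (((σγ j) ^ 2)⁻¹ * (γ j) ^ 2 + 1)) ≤ (D * (S + p)) * (D * (S + p)) :=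
    mul_le_mul hθu' hT6u hT6n hDT
  have q6n : 0 ≤ theta2 p γ σΓ * (∑ j, ((σΓ j) ^ 4)⁻¹ * (σγ j) ^ 4 *
      (((σγ j) ^ 2)⁻¹ * (γ j) ^ 2 + 1)) := mul_nonneg hθn hT6n
  have hDT2 : (0:ℝ) ≤ (D * (S + p)) * (D * (S + p)) := mul_nonneg hDT hDT
  have hΔ : |twoBetaSqDelta p γ σγ σΓ β₀|
      ≤ (8 * B ^ 2 + 12 * B + 10) * D ^ 2 * (S + p) ^ 2 := by
    rw [twoBetaSqDelta, abs_le]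
    constructor
    · linarith only [q1n, q2u, q3n, q4n, q5, q6,
        mul_nonneg (sq_nonneg B) hDT2, mul_nonneg hB.le hDT2, hDT2]
    · linarith only [q1, q2l, q3, q4, q5n, q6n,
        mul_nonneg (sq_nonneg B) hDT2, mul_nonneg hB.le hDT2, hDT2]
  -- final assembly
  have hθ4 : (c₁ * S) ^ 4 ≤ (theta2 p γ σΓ) ^ 4 :=
    pow_le_pow_left₀ (by positivity) hθl 4
  have step : |twoBetaSqDelta p γ σγ σΓ β₀| / (theta2 p γ σΓ) ^ 4
      ≤ ((8 * B ^ 2 + 12 * B + 10) * D ^ 2 * (S + p) ^ 2) / ((c₁ * S) ^ 4) :=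
    div_le_div₀ (by positivity) hΔ (by positivity) hθ4
  refine le_trans step ?_
  -- compute phi
  have hsq : Real.sqrt p * Real.sqrt p = (p:ℝ) := Real.mul_self_sqrt hp0.le
  have hpsi : psi p γ σγ * Real.sqrt p = S := by
    rw [psi, kappa, ← hSdef, mul_assoc, hsq]
    field_simp
  have hpsi2 : (psi p γ σγ) ^ 2 = S ^ 2 / p := by
    rw [psi, kappa, ← hSdef, mul_pow, Real.sq_sqrt hp0.le]
    field_simp
  have hphi : phi p γ σγ = S⁻¹ + (p:ℝ) / S ^ 2 := by
    rw [phi, hpsi, hpsi2, inv_div]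
  rw [hphi]
  have heq : ((8 * B ^ 2 + 12 * B + 10) * D ^ 2 * (S + p) ^ 2) / ((c₁ * S) ^ 4)
      = (8 * B ^ 2 + 12 * B + 10) * D ^ 2 / c₁ ^ 4 * (S⁻¹ + (p:ℝ) / S ^ 2) ^ 2 := by
    field_simp
  exact le_of_eq heq
end

section
/- Under balanced horizontal pleiotropy, the variance of the numerator of the dIVW estimator equals Var(θ̂₁) = Σ_{j=1}^p σ_{Γ,j}^{-4} [ β₀² σ_{γ,j}² γ_j² + (σ_{Γ,j}² + τ₀²)(γ_j² + σ_{γ,j}²) ]. -/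
open MeasureTheory ProbabilityTheory
open scoped NNReal ENNReal

section Helpers
open Real Filter
open scoped NNReal ENNReal


lemma myint_odd {b : ℝ} :
    ∫ x : ℝ, x * rexp (-b * x ^ 2) = 0 := by
  have h := integral_neg_eq_self (fun x : ℝ => x * rexp (-b * x ^ 2)) (volume : Measure ℝ)
  have h2 : (fun x : ℝ => (fun x : ℝ => x * rexp (-b * x ^ 2)) (-x))
      = fun x : ℝ => -(x * rexp (-b * x ^ 2)) := by
    funext x; simp only [neg_sq]; ring
  rw [h2, integral_neg] at h
  linarith

lemma myint_sq {b : ℝ} (hb : 0 < b) :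
    ∫ x : ℝ, x ^ 2 * rexp (-b * x ^ 2) = (2 * b)⁻¹ * Real.sqrt (π / b) := by
  have hu : ∀ x : ℝ, HasDerivAt (fun x : ℝ => x) 1 x := fun x => hasDerivAt_id x
  have hv : ∀ x : ℝ, HasDerivAt (fun x : ℝ => -(2 * b)⁻¹ * rexp (-b * x ^ 2))
      (x * rexp (-b * x ^ 2)) x := by
    intro x
    have h1 : HasDerivAt (fun x : ℝ => -b * x ^ 2) (-b * (2 * x)) x := by
      simpa using ((hasDerivAt_pow 2 x).const_mul (-b))
    have h2 := (h1.exp).const_mul (-(2 * b)⁻¹)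
    refine h2.congr_deriv ?_
    field_simp
  have huv' : Integrable (fun x : ℝ => x * (x * rexp (-b * x ^ 2))) := by
    have := integrable_rpow_mul_exp_neg_mul_sq hb (by norm_num : (-1:ℝ) < 2)
    refine this.congr (Eventually.of_forall fun x => ?_)
    have hx : (x:ℝ) ^ (2:ℝ) = x ^ (2:ℕ) := by
      rw [← Real.rpow_natCast x 2]; norm_num
    simp only [hx]
    ring
  have hu'v : Integrable (fun x : ℝ => (1:ℝ) * (-(2 * b)⁻¹ * rexp (-b * x ^ 2))) := by
    refine ((integrable_exp_neg_mul_sq hb).const_mul (-(2 * b)⁻¹)).congr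
      (Eventually.of_forall fun x => ?_)
    ring
  have huv : Integrable (fun x : ℝ => x * (-(2 * b)⁻¹ * rexp (-b * x ^ 2))) := by
    refine ((integrable_mul_exp_neg_mul_sq hb).const_mul (-(2 * b)⁻¹)).congr
      (Eventually.of_forall fun x => ?_)
    ring
  have key := integral_mul_deriv_eq_deriv_mul_of_integrable (fun x _ => hu x) (fun x _ => hv x) huv' hu'v huv
  have h2 : ∫ x : ℝ, x * (x * rexp (-b * x ^ 2)) = ∫ x : ℝ, x ^ 2 * rexp (-b * x ^ 2) := by
    congr 1; funext x; ring
  rw [h2] at key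
  rw [key]
  have : ∫ x : ℝ, (1:ℝ) * (-(2 * b)⁻¹ * rexp (-b * x ^ 2))
      = -(2 * b)⁻¹ * ∫ x : ℝ, rexp (-b * x ^ 2) := by
    rw [← integral_const_mul]; congr 1; funext x; ring
  rw [this, integral_gaussian]
  ring

section Gauss
variable {m : ℝ} {v : ℝ≥0}

-- reduction: integral over gaussian = shifted density integral
lemma gauss_int (hv : v ≠ 0) (g : ℝ → ℝ) :
    ∫ x, g x ∂(gaussianReal m v)
      = ∫ y, (Real.sqrt (2 * π * v))⁻¹ * rexp (-(2 * (v:ℝ))⁻¹ * y ^ 2) * g (y + m) := by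
  rw [gaussianReal_of_var_ne_zero m hv]
  have hmeas : Measurable fun x => (gaussianPDFReal m v x).toNNReal :=
    (measurable_gaussianPDFReal m v).real_toNNReal
  have hpdf : (gaussianPDF m v) = fun x => ((gaussianPDFReal m v x).toNNReal : ℝ≥0∞) := by
    funext x; rw [gaussianPDF]; rfl
  rw [hpdf, integral_withDensity_eq_integral_smul hmeas]
  have h1 : ∀ x, (gaussianPDFReal m v x).toNNReal • g x
      = gaussianPDFReal m v x * g x := by
    intro x
    rw [NNReal.smul_def, Real.coe_toNNReal _ (gaussianPDFReal_nonneg m v x), smul_eq_mul]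
  simp only [h1]
  have h2 : ∫ x, gaussianPDFReal m v x * g x
      = ∫ y, gaussianPDFReal m v (y + m) * g (y + m) := by
    exact (integral_add_right_eq_self (fun x => gaussianPDFReal m v x * g x) m).symm
  rw [h2]
  congr 1; funext y
  rw [gaussianPDFReal]
  have : -(y + m - m) ^ 2 / (2 * (v:ℝ)) = -(2 * (v:ℝ))⁻¹ * y ^ 2 := by
    rw [add_sub_cancel_right]; ring
  rw [this]
end Gauss

section Gauss2
variable {m : ℝ} {v : ℝ≥0}

lemma gauss_integrable (hv : v ≠ 0) (g : ℝ → ℝ)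
    (hint : Integrable (fun y =>
      (Real.sqrt (2 * π * v))⁻¹ * rexp (-(2 * (v:ℝ))⁻¹ * y ^ 2) * g (y + m)) volume) :
    Integrable g (gaussianReal m v) := by
  rw [gaussianReal_of_var_ne_zero m hv]
  have hmeas : Measurable fun x => (gaussianPDFReal m v x).toNNReal :=
    (measurable_gaussianPDFReal m v).real_toNNReal
  have hpdf : (gaussianPDF m v) = fun x => ((gaussianPDFReal m v x).toNNReal : ℝ≥0∞) := by
    funext x; rw [gaussianPDF]; rfl
  rw [hpdf, integrable_withDensity_iff_integrable_smul hmeas]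
  have h1 : (fun x => (gaussianPDFReal m v x).toNNReal • g x)
      = fun x => gaussianPDFReal m v x * g x := by
    funext x
    rw [NNReal.smul_def, Real.coe_toNNReal _ (gaussianPDFReal_nonneg m v x), smul_eq_mul]
  rw [h1]
  have h2 := hint.comp_sub_right m
  refine h2.congr (Eventually.of_forall fun x => ?_)
  simp only [gaussianPDFReal_def, sub_add_cancel]
  have : -(2 * (v:ℝ))⁻¹ * (x - m) ^ 2 = -(x - m) ^ 2 / (2 * (v:ℝ)) := by ring
  rw [this]

lemma hbpos (hv : v ≠ 0) : (0:ℝ) < (2 * (v:ℝ))⁻¹ := by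
  have h : (0:ℝ) < (v:ℝ) := lt_of_le_of_ne (v.coe_nonneg) (by exact_mod_cast (Ne.symm hv))
  positivity

lemma hsqrt_eq (hv : v ≠ 0) :
    Real.sqrt (π / (2 * (v:ℝ))⁻¹) = Real.sqrt (2 * π * v) := by
  rw [div_eq_mul_inv, inv_inv]; congr 1; ring

lemma hc_mul (hv : v ≠ 0) :
    (Real.sqrt (2 * π * v))⁻¹ * Real.sqrt (2 * π * v) = 1 := by
  have : (0:ℝ) < 2 * π * v := by
    have h : (0:ℝ) < (v:ℝ) := lt_of_le_of_ne (v.coe_nonneg) (by exact_mod_cast (Ne.symm hv))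
    positivity
  rw [inv_mul_cancel₀ (Real.sqrt_ne_zero'.mpr this)]
end Gauss2

section Gauss3
variable {m : ℝ} {v : ℝ≥0}

lemma int_c_exp (hv : v ≠ 0) : ∫ y : ℝ,
    (Real.sqrt (2 * π * v))⁻¹ * rexp (-(2 * (v:ℝ))⁻¹ * y ^ 2) = 1 := by
  rw [integral_const_mul, integral_gaussian, hsqrt_eq hv, hc_mul hv]

lemma int_c_y_exp (hv : v ≠ 0) : ∫ y : ℝ,
    (Real.sqrt (2 * π * v))⁻¹ * (y * rexp (-(2 * (v:ℝ))⁻¹ * y ^ 2)) = 0 := by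
  rw [integral_const_mul, myint_odd, mul_zero]

lemma int_c_sq_exp (hv : v ≠ 0) : ∫ y : ℝ,
    (Real.sqrt (2 * π * v))⁻¹ * (y ^ 2 * rexp (-(2 * (v:ℝ))⁻¹ * y ^ 2)) = (v:ℝ) := by
  rw [integral_const_mul, myint_sq (hbpos hv), hsqrt_eq hv]
  have h2 : (2 * (2 * (v:ℝ))⁻¹)⁻¹ = (v:ℝ) := by
    have h : (0:ℝ) < (v:ℝ) := lt_of_le_of_ne (v.coe_nonneg) (by exact_mod_cast (Ne.symm hv))
    field_simp
  rw [← mul_assoc, mul_comm ((Real.sqrt (2 * π * v))⁻¹), mul_assoc, hc_mul hv, h2, mul_one]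

-- integrability of the three shifted pieces
lemma intg_c_exp (hv : v ≠ 0) (a : ℝ) : Integrable (fun y : ℝ =>
    a * rexp (-(2 * (v:ℝ))⁻¹ * y ^ 2)) volume :=
  (integrable_exp_neg_mul_sq (hbpos hv)).const_mul a

lemma intg_c_y_exp (hv : v ≠ 0) (a : ℝ) : Integrable (fun y : ℝ =>
    a * (y * rexp (-(2 * (v:ℝ))⁻¹ * y ^ 2))) volume :=
  (integrable_mul_exp_neg_mul_sq (hbpos hv)).const_mul a

lemma intg_c_sq_exp (hv : v ≠ 0) (a : ℝ) : Integrable (fun y : ℝ =>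
    a * (y ^ 2 * rexp (-(2 * (v:ℝ))⁻¹ * y ^ 2))) volume := by
  have := (integrable_rpow_mul_exp_neg_mul_sq (hbpos hv) (by norm_num : (-1:ℝ) < 2)).const_mul a
  refine this.congr (Eventually.of_forall fun x => ?_)
  have hx : (x:ℝ) ^ (2:ℝ) = x ^ (2:ℕ) := by
    rw [← Real.rpow_natCast x 2]; norm_num
  simp only [hx]

lemma gauss_integrable_id (hv : v ≠ 0) :
    Integrable (fun x => x) (gaussianReal m v) := by
  refine gauss_integrable hv _ ?_
  have h := (intg_c_y_exp hv (Real.sqrt (2 * π * v))⁻¹).add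
    (intg_c_exp hv ((Real.sqrt (2 * π * v))⁻¹ * m))
  refine h.congr (Eventually.of_forall fun y => ?_)
  simp only [Pi.add_apply]; ring

lemma gauss_integrable_sq (hv : v ≠ 0) :
    Integrable (fun x => x ^ 2) (gaussianReal m v) := by
  refine gauss_integrable hv _ ?_
  have h := ((intg_c_sq_exp hv (Real.sqrt (2 * π * v))⁻¹).add
    (intg_c_y_exp hv ((Real.sqrt (2 * π * v))⁻¹ * (2 * m)))).add
    (intg_c_exp hv ((Real.sqrt (2 * π * v))⁻¹ * m ^ 2))
  refine h.congr (Eventually.of_forall fun y => ?_)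
  simp only [Pi.add_apply]; ring

lemma gauss_int_id (hv : v ≠ 0) : ∫ x, x ∂(gaussianReal m v) = m := by
  rw [gauss_int hv]
  have hsplit : (fun y : ℝ => (Real.sqrt (2 * π * v))⁻¹ * rexp (-(2 * (v:ℝ))⁻¹ * y ^ 2) * (y + m))
      = fun y => (Real.sqrt (2 * π * v))⁻¹ * (y * rexp (-(2 * (v:ℝ))⁻¹ * y ^ 2))
          + ((Real.sqrt (2 * π * v))⁻¹ * m) * rexp (-(2 * (v:ℝ))⁻¹ * y ^ 2) := by
    funext y; ring
  rw [hsplit, integral_add (intg_c_y_exp hv _) (intg_c_exp hv _), int_c_y_exp hv,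
    integral_const_mul, integral_gaussian, hsqrt_eq hv]
  rw [mul_comm ((Real.sqrt (2 * π * v))⁻¹) m, mul_assoc, hc_mul hv]
  ring

lemma gauss_int_sq (hv : v ≠ 0) : ∫ x, x ^ 2 ∂(gaussianReal m v) = (v:ℝ) + m ^ 2 := by
  rw [gauss_int hv]
  set c := (Real.sqrt (2 * π * v))⁻¹ with hc
  set b := (2 * (v:ℝ))⁻¹ with hb
  have h1 : Integrable (fun y : ℝ => c * (y ^ 2 * rexp (-b * y ^ 2))) volume :=
    intg_c_sq_exp hv c
  have h2 : Integrable (fun y : ℝ => (c * (2 * m)) * (y * rexp (-b * y ^ 2))) volume :=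
    intg_c_y_exp hv _
  have h3 : Integrable (fun y : ℝ => (c * m ^ 2) * rexp (-b * y ^ 2)) volume :=
    intg_c_exp hv _
  have hsplit : (fun y : ℝ => c * rexp (-b * y ^ 2) * (y + m) ^ 2)
      = fun y => (c * (y ^ 2 * rexp (-b * y ^ 2)) + (c * (2 * m)) * (y * rexp (-b * y ^ 2)))
          + (c * m ^ 2) * rexp (-b * y ^ 2) := by
    funext y; ring
  rw [hsplit]
  have e1 : ∫ y : ℝ, ((c * (y ^ 2 * rexp (-b * y ^ 2)) + (c * (2 * m)) * (y * rexp (-b * y ^ 2)))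
        + (c * m ^ 2) * rexp (-b * y ^ 2))
      = (∫ y : ℝ, (c * (y ^ 2 * rexp (-b * y ^ 2)) + (c * (2 * m)) * (y * rexp (-b * y ^ 2))))
        + ∫ y : ℝ, (c * m ^ 2) * rexp (-b * y ^ 2) := integral_add (h1.add h2) h3
  have e2 : ∫ y : ℝ, (c * (y ^ 2 * rexp (-b * y ^ 2)) + (c * (2 * m)) * (y * rexp (-b * y ^ 2)))
      = (∫ y : ℝ, c * (y ^ 2 * rexp (-b * y ^ 2)))
        + ∫ y : ℝ, (c * (2 * m)) * (y * rexp (-b * y ^ 2)) := integral_add h1 h2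
  rw [e1, e2, int_c_sq_exp hv]
  rw [integral_const_mul, myint_odd, integral_const_mul, integral_gaussian, hsqrt_eq hv]
  have : c * m ^ 2 * Real.sqrt (2 * π * v) = m ^ 2 * (c * Real.sqrt (2 * π * v)) := by ring
  rw [this, hc, hc_mul hv]
  ring

end Gauss3

section Prob
variable {Ω : Type*} [MeasureSpace Ω] [IsProbabilityMeasure (ℙ : Measure Ω)]
  {X : Ω → ℝ} {m : ℝ} {v : ℝ≥0}

lemma aemeas_of_map_gauss (hX : Measure.map X ℙ = gaussianReal m v) :
    AEMeasurable X ℙ := by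
  by_contra h
  rw [Measure.map_of_not_aemeasurable h] at hX
  have h1 : (0 : Measure ℝ) Set.univ = 1 := by
    rw [hX]; exact measure_univ
  simp at h1

lemma memℒp_two_of_map_gauss (hv : v ≠ 0) (hXm : AEMeasurable X ℙ)
    (hX : Measure.map X ℙ = gaussianReal m v) : MemLp X 2 ℙ := by
  have hid : MemLp (fun x : ℝ => x) 2 (gaussianReal m v) := by
    rw [memLp_two_iff_integrable_sq (f := fun x : ℝ => x) aestronglyMeasurable_id]
    exact (gauss_integrable_sq hv).congr (Eventually.of_forall fun x => by simp)
  have := (memLp_map_measure_iff aestronglyMeasurable_id hXm).mp (hX ▸ hid)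
  exact this

lemma integral_of_map_gauss (hv : v ≠ 0) (hXm : AEMeasurable X ℙ)
    (hX : Measure.map X ℙ = gaussianReal m v) : ∫ ω, X ω ∂ℙ = m := by
  rw [← gauss_int_id (m := m) hv, ← hX,
    integral_map (f := fun x : ℝ => x) hXm aestronglyMeasurable_id]

lemma integral_sq_of_map_gauss (hv : v ≠ 0) (hXm : AEMeasurable X ℙ)
    (hX : Measure.map X ℙ = gaussianReal m v) : ∫ ω, X ω ^ 2 ∂ℙ = (v:ℝ) + m ^ 2 := by
  rw [← gauss_int_sq (m := m) hv, ← hX,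
    integral_map (f := fun x : ℝ => x ^ 2) hXm (by fun_prop)]

end Prob

section AE
variable {Ω : Type*} [MeasurableSpace Ω] {μ : Measure Ω}

lemma my_variance_congr {X Y : Ω → ℝ} (h : X =ᵐ[μ] Y) : variance X μ = variance Y μ := by
  have hi : ∫ ω, X ω ∂μ = ∫ ω, Y ω ∂μ := integral_congr_ae h
  rw [variance, variance, evariance, evariance, hi]
  congr 1
  refine lintegral_congr_ae ?_
  filter_upwards [h] with ω hω
  rw [hω]

lemma preimage_ae_eq {f g : Ω → ℝ} (h : f =ᵐ[μ] g) (A : Set ℝ) :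
    (f ⁻¹' A : Set Ω) =ᵐ[μ] (g ⁻¹' A : Set Ω) := by
  have hnull : μ {ω | f ω ≠ g ω} = 0 := by
    rw [EventuallyEq, ae_iff] at h; exact h
  rw [Filter.eventuallyEq_set]
  filter_upwards [h] with ω hω
  simp [Set.mem_preimage, hω]

lemma my_iIndepFun_ae {ι : Type*} {f g : ι → Ω → ℝ}
    (hf : iIndepFun f μ) (h : ∀ i, f i =ᵐ[μ] g i) :
    iIndepFun g μ := by
  classical
  rw [iIndepFun_iff] at hf ⊢
  intro s f' hf'
  -- choose measurable sets
  have hsets : ∀ i, ∃ A : Set ℝ, i ∈ s → MeasurableSet A ∧ g i ⁻¹' A = f' i := by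
    intro i
    by_cases hi : i ∈ s
    · obtain ⟨A, hA, hApre⟩ := hf' i hi
      exact ⟨A, fun _ => ⟨hA, hApre⟩⟩
    · exact ⟨∅, fun h' => absurd h' hi⟩
  choose A hA using hsets
  have hae : ∀ i ∈ s, (f' i : Set Ω) =ᵐ[μ] (f i ⁻¹' A i : Set Ω) := by
    intro i hi
    rw [← (hA i hi).2]
    exact (preimage_ae_eq (h i).symm (A i))
  have hmeas' : ∀ i, i ∈ s → MeasurableSet[MeasurableSpace.comap (f i) inferInstance]
      (f i ⁻¹' A i) := fun i hi => ⟨A i, (hA i hi).1, rfl⟩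
  have hkey := hf s hmeas'
  have hinter : μ (⋂ i ∈ s, f' i) = μ (⋂ i ∈ s, f i ⁻¹' A i) := by
    apply measure_congr
    rw [Filter.eventuallyEq_set]
    have hall : ∀ᵐ ω ∂μ, ∀ i ∈ s, (ω ∈ f' i ↔ ω ∈ f i ⁻¹' A i) := by
      rw [Filter.eventually_all_finset]
      intro i hi
      have := hae i hi
      rw [Filter.eventuallyEq_set] at this
      exact this
    filter_upwards [hall] with ω hω
    simp only [Set.mem_iInter]
    exact ⟨fun hm i hi => (hω i hi).mp (hm i hi), fun hm i hi => (hω i hi).mpr (hm i hi)⟩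
  rw [hinter, hkey]
  exact Finset.prod_congr rfl fun i hi => (measure_congr (hae i hi)).symm
end AE

section Term
variable {Ω : Type*} [MeasureSpace Ω] [IsProbabilityMeasure (ℙ : Measure Ω)]

lemma term_memℒp {X Y : Ω → ℝ} (hXm : Measurable X) (hYm : Measurable Y)
    (hXY : IndepFun X Y ℙ) (hX2 : MemLp X 2 ℙ) (hY2 : MemLp Y 2 ℙ) :
    MemLp (fun ω => X ω * Y ω) 2 ℙ := by
  have hsq : IndepFun (fun ω => X ω ^ 2) (fun ω => Y ω ^ 2) ℙ :=
    hXY.comp (measurable_id.pow_const 2) (measurable_id.pow_const 2)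
  have hmul : Integrable (fun ω => X ω ^ 2 * Y ω ^ 2) ℙ :=
    hsq.integrable_mul hX2.integrable_sq hY2.integrable_sq
  rw [memLp_two_iff_integrable_sq (f := fun ω => X ω * Y ω) ((hXm.mul hYm).aestronglyMeasurable)]
  exact hmul.congr (Filter.Eventually.of_forall fun ω => by ring)

lemma term_variance {X Y : Ω → ℝ} (hXm : Measurable X) (hYm : Measurable Y)
    (hXY : IndepFun X Y ℙ) (hX2 : MemLp X 2 ℙ) (hY2 : MemLp Y 2 ℙ) :
    variance (fun ω => X ω * Y ω) ℙ
      = (∫ ω, X ω ^ 2 ∂ℙ) * (∫ ω, Y ω ^ 2 ∂ℙ) - ((∫ ω, X ω ∂ℙ) * (∫ ω, Y ω ∂ℙ)) ^ 2 := by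
  have hsq : IndepFun (fun ω => X ω ^ 2) (fun ω => Y ω ^ 2) ℙ :=
    hXY.comp (measurable_id.pow_const 2) (measurable_id.pow_const 2)
  rw [variance_eq_sub (term_memℒp hXm hYm hXY hX2 hY2)]
  have h1 : (∫ ω, ((fun ω => X ω * Y ω) ^ 2) ω ∂ℙ) = ∫ ω, (X ω ^ 2) * (Y ω ^ 2) ∂ℙ := by
    refine integral_congr_ae (Filter.Eventually.of_forall fun ω => ?_)
    simp [Pi.pow_apply]; ring
  have h2 : ∫ ω, (X ω ^ 2) * (Y ω ^ 2) ∂ℙ = (∫ ω, X ω ^ 2 ∂ℙ) * (∫ ω, Y ω ^ 2 ∂ℙ) :=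
    hsq.integral_fun_mul_eq_mul_integral hX2.integrable_sq.aestronglyMeasurable
      hY2.integrable_sq.aestronglyMeasurable
  have h3 : ∫ ω, X ω * Y ω ∂ℙ = (∫ ω, X ω ∂ℙ) * (∫ ω, Y ω ∂ℙ) :=
    hXY.integral_fun_mul_eq_mul_integral hX2.aestronglyMeasurable hY2.aestronglyMeasurable
  rw [h1, h2, h3]
end Term


end Helpers

/-- under balanced horizontal pleiotropy
(`Γ̂ j ~ N(β₀ γ j, σΓ j ² + τ₀²)`), the variance of the numerator of the dIVW
estimator equals
`∑ j, σΓ j ⁻⁴ [β₀² σγ j ² γ j ² + (σΓ j ² + τ₀²)(γ j ² + σγ j ²)]`. -/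
theorem pleiotropy_numerator_variance
{Ω : Type*} [MeasureSpace Ω] [IsProbabilityMeasure (ℙ : Measure Ω)]
    (p : ℕ) (hp : 1 ≤ p) (γ : Fin p → ℝ) (β₀ τ₀ : ℝ) (hτ : 0 ≤ τ₀)
    (σγ σΓ : Fin p → ℝ) (hσγ : ∀ j, 0 < σγ j) (hσΓ : ∀ j, 0 < σΓ j)
    (γhat Γhat : Fin p → Ω → ℝ)
    (hindep : iIndepFun
      (Sum.elim γhat Γhat : Fin p ⊕ Fin p → Ω → ℝ) ℙ)
    (hγ : ∀ j, Measure.map (γhat j) ℙ = gaussianReal (γ j) ⟨(σγ j) ^ 2, sq_nonneg _⟩)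
    -- balanced horizontal pleiotropy: `Γ̂ j ~ N(β₀ γ j, σΓ j ² + τ₀²)`
    (hΓ : ∀ j, Measure.map (Γhat j) ℙ
      = gaussianReal (β₀ * γ j)
          ⟨(σΓ j) ^ 2 + τ₀ ^ 2, by positivity⟩) :
    variance (fun ω => ∑ j, ((σΓ j) ^ 2)⁻¹ * (γhat j ω * Γhat j ω)) ℙ
      = ∑ j, ((σΓ j) ^ 4)⁻¹ *
          (β₀ ^ 2 * (σγ j) ^ 2 * (γ j) ^ 2
            + ((σΓ j) ^ 2 + τ₀ ^ 2) * ((γ j) ^ 2 + (σγ j) ^ 2)) := by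
  classical
  -- variances (as NNReal) and their nonvanishing
  set vγ : Fin p → ℝ≥0 := fun j => ⟨(σγ j) ^ 2, sq_nonneg _⟩ with hvγ
  set vΓ : Fin p → ℝ≥0 := fun j => ⟨(σΓ j) ^ 2 + τ₀ ^ 2, by positivity⟩ with hvΓ
  have hvγ0 : ∀ j, vγ j ≠ 0 := by
    intro j hh
    have h2 := congrArg NNReal.toReal hh
    simp only [hvγ, NNReal.coe_mk, NNReal.coe_zero] at h2
    exact (pow_ne_zero 2 (hσγ j).ne') h2
  have hvΓ0 : ∀ j, vΓ j ≠ 0 := by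
    intro j hh
    have h2 := congrArg NNReal.toReal hh
    simp only [hvΓ, NNReal.coe_mk, NNReal.coe_zero] at h2
    change σΓ j ^ 2 + τ₀ ^ 2 = 0 at h2
    nlinarith [hσΓ j, sq_nonneg τ₀]
  -- aemeasurability
  have haeγ : ∀ j, AEMeasurable (γhat j) ℙ := fun j => aemeas_of_map_gauss (hγ j)
  have haeΓ : ∀ j, AEMeasurable (Γhat j) ℙ := fun j => aemeas_of_map_gauss (hΓ j)
  -- measurable modifications
  set gm : Fin p → Ω → ℝ := fun j => (haeγ j).mk _ with hgmdef
  set Gm : Fin p → Ω → ℝ := fun j => (haeΓ j).mk _ with hGmdef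
  have hgmm : ∀ j, Measurable (gm j) := fun j => (haeγ j).measurable_mk
  have hGmm : ∀ j, Measurable (Gm j) := fun j => (haeΓ j).measurable_mk
  have hgme : ∀ j, γhat j =ᵐ[ℙ] gm j := fun j => (haeγ j).ae_eq_mk
  have hGme : ∀ j, Γhat j =ᵐ[ℙ] Gm j := fun j => (haeΓ j).ae_eq_mk
  have hγ' : ∀ j, Measure.map (gm j) ℙ = gaussianReal (γ j) (vγ j) := by
    intro j; rw [← Measure.map_congr (hgme j)]; exact hγ j
  have hΓ' : ∀ j, Measure.map (Gm j) ℙ = gaussianReal (β₀ * γ j) (vΓ j) := by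
    intro j; rw [← Measure.map_congr (hGme j)]; exact hΓ j
  have hindep' : iIndepFun
      (Sum.elim gm Gm : Fin p ⊕ Fin p → Ω → ℝ) ℙ := by
    refine my_iIndepFun_ae hindep ?_
    intro i
    cases i with
    | inl j => simpa using hgme j
    | inr j => simpa using hGme j
  have hmeasAll : ∀ i, Measurable ((Sum.elim gm Gm : Fin p ⊕ Fin p → Ω → ℝ) i) := by
    intro i
    cases i with
    | inl j => exact hgmm j
    | inr j => exact hGmm j
  -- replace by measurable versions in the variance
  have hvc : variance (fun ω => ∑ j, ((σΓ j) ^ 2)⁻¹ * (γhat j ω * Γhat j ω)) ℙ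
      = variance (fun ω => ∑ j, ((σΓ j) ^ 2)⁻¹ * (gm j ω * Gm j ω)) ℙ := by
    refine my_variance_congr ?_
    have hall : ∀ᵐ ω ∂ℙ, ∀ j, γhat j ω = gm j ω ∧ Γhat j ω = Gm j ω := by
      rw [ae_all_iff]
      intro j
      filter_upwards [hgme j, hGme j] with ω h1 h2 using ⟨h1, h2⟩
    filter_upwards [hall] with ω hω
    refine Finset.sum_congr rfl fun j _ => ?_
    rw [(hω j).1, (hω j).2]
  rw [hvc]
  -- MemLp facts
  have hg2 : ∀ j, MemLp (gm j) 2 ℙ :=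
    fun j => memℒp_two_of_map_gauss (hvγ0 j) (hgmm j).aemeasurable (hγ' j)
  have hG2 : ∀ j, MemLp (Gm j) 2 ℙ :=
    fun j => memℒp_two_of_map_gauss (hvΓ0 j) (hGmm j).aemeasurable (hΓ' j)
  have hXYindep : ∀ j, IndepFun (gm j) (Gm j) ℙ := by
    intro j
    have := hindep'.indepFun (i := Sum.inl j) (j := Sum.inr j) (by simp)
    simpa using this
  -- the summand random variables
  set T : Fin p → Ω → ℝ := fun j ω => ((σΓ j) ^ 2)⁻¹ * (gm j ω * Gm j ω) with hT
  have hTmem : ∀ j ∈ Finset.univ, MemLp (T j) 2 ℙ := by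
    intro j _
    exact (term_memℒp (hgmm j) (hGmm j) (hXYindep j) (hg2 j) (hG2 j)).const_mul _
  have hTpair : Set.Pairwise ↑(Finset.univ : Finset (Fin p))
      (fun i j => IndepFun (T i) (T j) ℙ) := by
    intro i _ j _ hij
    have hmul : IndepFun
        ((Sum.elim gm Gm (Sum.inl i)) * (Sum.elim gm Gm (Sum.inr i)))
        ((Sum.elim gm Gm (Sum.inl j)) * (Sum.elim gm Gm (Sum.inr j))) ℙ :=
      hindep'.indepFun_mul_mul hmeasAll (Sum.inl i) (Sum.inr i) (Sum.inl j) (Sum.inr j)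
        (by simp [hij]) (by simp) (by simp) (by simp [hij])
    have hc := hmul.comp (measurable_const_mul (((σΓ i) ^ 2)⁻¹))
      (measurable_const_mul (((σΓ j) ^ 2)⁻¹))
    exact hc
  have hsum_eq : (fun ω => ∑ j, ((σΓ j) ^ 2)⁻¹ * (gm j ω * Gm j ω))
      = ∑ j ∈ Finset.univ, T j := by
    funext ω
    simp [hT, Finset.sum_apply]
  rw [hsum_eq, IndepFun.variance_sum hTmem hTpair]
  refine Finset.sum_congr rfl fun j _ => ?_
  -- per-term computation
  have hvarT : variance (T j) ℙ = (((σΓ j) ^ 2)⁻¹) ^ 2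
      * variance (fun ω => gm j ω * Gm j ω) ℙ := by
    exact variance_const_mul _ _ _
  rw [hvarT, term_variance (hgmm j) (hGmm j) (hXYindep j) (hg2 j) (hG2 j)]
  rw [integral_of_map_gauss (hvγ0 j) (hgmm j).aemeasurable (hγ' j),
    integral_of_map_gauss (hvΓ0 j) (hGmm j).aemeasurable (hΓ' j),
    integral_sq_of_map_gauss (hvγ0 j) (hgmm j).aemeasurable (hγ' j),
    integral_sq_of_map_gauss (hvΓ0 j) (hGmm j).aemeasurable (hΓ' j)]
  have hcγ : ((vγ j : ℝ≥0) : ℝ) = (σγ j) ^ 2 := rfl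
  have hcΓ : ((vΓ j : ℝ≥0) : ℝ) = (σΓ j) ^ 2 + τ₀ ^ 2 := rfl
  rw [hcγ, hcΓ]
  ring
end
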